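/- arXiv:2305.04326 — 9 statements merged into one kernel-verified Lean document; each statement's English description precedes it below -/
import Mathlib

section
/- Let d be a positive integer, let r ≥ √d be a real number, and let β ≥ 1. Then the sum over all lattice points x ∈ ℤ^d with ‖x‖ ≥ r of exp(−β‖x‖²) is at most (8π)^{d/2} · exp(−β(r−√d)²/2). -/
open scoped BigOperators

set_option maxHeartbeats 1000000

private lemma hasSum_pair {ι κ : Type*} {f : ι → ℝ} {g : κ → ℝ} {S T : ℝ}
    (hf : HasSum f S) (hg : HasSum g T) (h1 : Summable fun i => ‖f i‖)
    (h2 : Summable fun k => ‖g k‖) :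
    HasSum (fun p : ι × κ => f p.1 * g p.2) (S * T) :=
  hf.mul hg (summable_mul_of_summable_norm h1 h2)

private lemma hasSum_pi_prod {f : ℤ → ℝ} {S : ℝ} (hf : HasSum f S)
    (hf0 : ∀ n, 0 ≤ f n) (d : ℕ) :
    HasSum (fun x : Fin d → ℤ => ∏ i, f (x i)) (S ^ d) := by
  induction d with
  | zero =>
      have h0 : HasSum (fun x : Fin 0 → ℤ => ∏ i, f (x i))
          ((fun x : Fin 0 → ℤ => ∏ i, f (x i)) (fun i => i.elim0)) :=
        hasSum_single _ (fun b hb => absurd (Subsingleton.elim b _) hb)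
      simpa using h0
  | succ d ih =>
      have hnf : (fun n => ‖f n‖) = f := funext fun n => Real.norm_of_nonneg (hf0 n)
      have hnormf : Summable fun n => ‖f n‖ := by rw [hnf]; exact hf.summable
      have hnP : (fun x : Fin d → ℤ => ‖∏ i, f (x i)‖) = fun x : Fin d → ℤ => ∏ i, f (x i) :=
        funext fun x => Real.norm_of_nonneg (Finset.prod_nonneg fun i _ => hf0 _)
      have hnormP : Summable fun x : Fin d → ℤ => ‖∏ i, f (x i)‖ := by
        rw [hnP]; exact ih.summable
      have hpair : HasSum (fun p : ℤ × (Fin d → ℤ) => f p.1 * ∏ i, f (p.2 i)) (S * S ^ d) := by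
        apply hasSum_pair hf ih hnormf hnormP
      have hcomp : ((fun x : Fin (d + 1) → ℤ => ∏ i, f (x i)) ∘
          (Fin.consEquiv (fun _ : Fin (d + 1) => ℤ)))
          = fun p : ℤ × (Fin d → ℤ) => f p.1 * ∏ i, f (p.2 i) := by
        funext p
        simp [Fin.consEquiv, Fin.prod_univ_succ]
      have hkey : HasSum ((fun x : Fin (d + 1) → ℤ => ∏ i, f (x i)) ∘
          (Fin.consEquiv (fun _ : Fin (d + 1) => ℤ))) (S * S ^ d) := by
        rw [hcomp]; exact hpair
      have he := (Equiv.hasSum_iff _).mp hkey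
      simpa [pow_succ, mul_comm] using he

private lemma int_gauss_bound {c : ℝ} (hc : 1 / 2 ≤ c) :
    ∃ S : ℝ, HasSum (fun n : ℤ => Real.exp (-c * (n : ℝ) ^ 2)) S ∧ 0 ≤ S ∧
      S ≤ Real.sqrt (8 * Real.pi) := by
  set q : ℝ := Real.exp (-(1 / 2 : ℝ)) with hq
  have hq0 : 0 ≤ q := (Real.exp_pos _).le
  have hq23 : q ≤ 2 / 3 := by
    have h1 : (3 / 2 : ℝ) ≤ Real.exp (1 / 2) := by
      have := Real.add_one_le_exp (1 / 2 : ℝ)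
      linarith
    have h2 : q = (Real.exp (1 / 2))⁻¹ := by
      rw [hq, ← Real.exp_neg]
    rw [h2]
    rw [inv_le_comm₀ (Real.exp_pos _) (by norm_num)] at *
    · linarith
  have hq1 : q < 1 := lt_of_le_of_lt hq23 (by norm_num)
  -- geometric sum over ℤ of q ^ natAbs
  have hgeo : HasSum (fun n : ℕ => q ^ n) (1 - q)⁻¹ := hasSum_geometric_of_lt_one hq0 hq1
  have hneg : HasSum (fun n : ℕ => q ^ ((-(n + 1) : ℤ)).natAbs) (q * (1 - q)⁻¹) := by
    have := hgeo.mul_left q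
    have heq : (fun n : ℕ => q * q ^ n) = fun n : ℕ => q ^ ((-(n + 1) : ℤ)).natAbs := by
      funext n
      have : ((-(n + 1) : ℤ)).natAbs = n + 1 := by
        rw [show ((-(n + 1) : ℤ)) = -((n + 1 : ℕ) : ℤ) by push_cast; ring,
          Int.natAbs_neg, Int.natAbs_natCast]
      rw [this, pow_succ]
      ring
    rwa [heq] at this
  have hpos : HasSum (fun n : ℕ => q ^ ((n : ℤ)).natAbs) (1 - q)⁻¹ := by
    simpa using hgeo
  have hg : HasSum (fun n : ℤ => q ^ n.natAbs) ((1 - q)⁻¹ + q * (1 - q)⁻¹) :=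
    HasSum.of_nat_of_neg_add_one hpos hneg
  -- pointwise bound
  have hle : ∀ n : ℤ, Real.exp (-c * (n : ℝ) ^ 2) ≤ q ^ n.natAbs := by
    intro n
    have h1 : (n : ℝ) ^ 2 = (n.natAbs : ℝ) ^ 2 := by
      rw [Nat.cast_natAbs, Int.cast_abs, sq_abs]
    have h2 : (n.natAbs : ℝ) ≤ (n.natAbs : ℝ) ^ 2 := by
      rcases Nat.eq_zero_or_pos n.natAbs with h | h
      · simp [h]
      · have h1' : (1 : ℝ) ≤ (n.natAbs : ℝ) := by exact_mod_cast h
        nlinarith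
    have h3 : -c * (n : ℝ) ^ 2 ≤ (n.natAbs : ℝ) * (-(1 / 2)) := by
      rw [h1]
      nlinarith [sq_nonneg ((n.natAbs : ℝ))]
    calc Real.exp (-c * (n : ℝ) ^ 2) ≤ Real.exp ((n.natAbs : ℝ) * (-(1 / 2))) :=
          Real.exp_le_exp.mpr h3
      _ = q ^ n.natAbs := by rw [hq, ← Real.exp_nat_mul]
  have hsumm : Summable fun n : ℤ => Real.exp (-c * (n : ℝ) ^ 2) :=
    Summable.of_nonneg_of_le (fun n => (Real.exp_pos _).le) hle hg.summable
  refine ⟨_, hsumm.hasSum, tsum_nonneg fun n => (Real.exp_pos _).le, ?_⟩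
  have h5 : (5 : ℝ) ≤ Real.sqrt (8 * Real.pi) := by
    rw [Real.le_sqrt (by norm_num) (by positivity)]
    nlinarith [Real.pi_gt_d6]
  have hbound : (1 - q)⁻¹ + q * (1 - q)⁻¹ ≤ 5 := by
    have h1q : 0 < 1 - q := by linarith
    have ht3 : (1 - q)⁻¹ ≤ 3 := by
      rw [inv_le_comm₀ h1q (by norm_num)]
      linarith
    have ht0 : 0 < (1 - q)⁻¹ := inv_pos.mpr h1q
    nlinarith
  calc (∑' n : ℤ, Real.exp (-c * (n : ℝ) ^ 2)) ≤ ∑' n : ℤ, q ^ n.natAbs :=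
        Summable.tsum_le_tsum hle hsumm hg.summable
    _ = (1 - q)⁻¹ + q * (1 - q)⁻¹ := hg.tsum_eq
    _ ≤ 5 := hbound
    _ ≤ Real.sqrt (8 * Real.pi) := h5

theorem stmt_0 (d : ℕ) (hd : 0 < d) (r β : ℝ) (hr : Real.sqrt d ≤ r) (hβ : 1 ≤ β) :
    (∑' x : Fin d → ℤ,
      if r ≤ Real.sqrt (∑ i, ((x i : ℝ)) ^ 2) then
        Real.exp (-β * (∑ i, ((x i : ℝ)) ^ 2)) else 0)
    ≤ (8 * Real.pi) ^ ((d : ℝ) / 2) * Real.exp (-β * (r - Real.sqrt d) ^ 2 / 2) := by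
  have hr0 : 0 ≤ r := le_trans (Real.sqrt_nonneg _) hr
  have hβ0 : 0 < β := lt_of_lt_of_le one_pos hβ
  set c : ℝ := β / 2 with hc
  have hc12 : 1 / 2 ≤ c := by rw [hc]; linarith
  obtain ⟨S, hS, hS0, hSle⟩ := int_gauss_bound hc12
  -- product sum
  have hprod : HasSum (fun x : Fin d → ℤ => ∏ i, Real.exp (-c * ((x i : ℝ)) ^ 2)) (S ^ d) :=
    hasSum_pi_prod hS (fun n => (Real.exp_pos _).le) d
  have hprodeq : (fun x : Fin d → ℤ => ∏ i, Real.exp (-c * ((x i : ℝ)) ^ 2))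
      = fun x : Fin d → ℤ => Real.exp (-c * ∑ i, ((x i : ℝ)) ^ 2) := by
    funext x
    rw [← Real.exp_sum]
    congr 1
    rw [Finset.mul_sum]
  rw [hprodeq] at hprod
  -- pointwise bound on the summands
  have hpt : ∀ x : Fin d → ℤ,
      (if r ≤ Real.sqrt (∑ i, ((x i : ℝ)) ^ 2) then
        Real.exp (-β * (∑ i, ((x i : ℝ)) ^ 2)) else 0)
      ≤ Real.exp (-β * r ^ 2 / 2) * Real.exp (-c * ∑ i, ((x i : ℝ)) ^ 2) := by
    intro x
    set Q : ℝ := ∑ i, ((x i : ℝ)) ^ 2 with hQ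
    have hQ0 : 0 ≤ Q := Finset.sum_nonneg fun i _ => sq_nonneg _
    split_ifs with h
    · have hrQ : r ^ 2 ≤ Q := by
        have := Real.sq_sqrt hQ0
        nlinarith [Real.sqrt_nonneg Q, Real.sq_sqrt hQ0]
      rw [← Real.exp_add]
      apply Real.exp_le_exp.mpr
      rw [hc]
      nlinarith
    · positivity
  have hsummR : Summable fun x : Fin d → ℤ =>
      Real.exp (-β * r ^ 2 / 2) * Real.exp (-c * ∑ i, ((x i : ℝ)) ^ 2) :=
    hprod.summable.mul_left _
  have hsummL : Summable fun x : Fin d → ℤ =>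
      (if r ≤ Real.sqrt (∑ i, ((x i : ℝ)) ^ 2) then
        Real.exp (-β * (∑ i, ((x i : ℝ)) ^ 2)) else 0) :=
    Summable.of_nonneg_of_le (fun x => by positivity) hpt hsummR
  have step1 : (∑' x : Fin d → ℤ,
      if r ≤ Real.sqrt (∑ i, ((x i : ℝ)) ^ 2) then
        Real.exp (-β * (∑ i, ((x i : ℝ)) ^ 2)) else 0)
      ≤ Real.exp (-β * r ^ 2 / 2) * S ^ d := by
    calc (∑' x : Fin d → ℤ,
        if r ≤ Real.sqrt (∑ i, ((x i : ℝ)) ^ 2) then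
          Real.exp (-β * (∑ i, ((x i : ℝ)) ^ 2)) else 0)
        ≤ ∑' x : Fin d → ℤ,
          Real.exp (-β * r ^ 2 / 2) * Real.exp (-c * ∑ i, ((x i : ℝ)) ^ 2) :=
          Summable.tsum_le_tsum hpt hsummL hsummR
      _ = Real.exp (-β * r ^ 2 / 2) * ∑' x : Fin d → ℤ,
          Real.exp (-c * ∑ i, ((x i : ℝ)) ^ 2) := tsum_mul_left
      _ = Real.exp (-β * r ^ 2 / 2) * S ^ d := by rw [hprod.tsum_eq]
  -- bound the RHS
  have hexp : Real.exp (-β * r ^ 2 / 2) ≤ Real.exp (-β * (r - Real.sqrt d) ^ 2 / 2) := by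
    apply Real.exp_le_exp.mpr
    have h1 : (r - Real.sqrt d) ^ 2 ≤ r ^ 2 := by
      have h2 : 0 ≤ r - Real.sqrt d := by linarith
      nlinarith [Real.sqrt_nonneg (d : ℝ)]
    nlinarith
  have hpow : S ^ d ≤ (8 * Real.pi) ^ ((d : ℝ) / 2) := by
    have h1 : (8 * Real.pi) ^ ((d : ℝ) / 2) = Real.sqrt (8 * Real.pi) ^ d := by
      rw [Real.sqrt_eq_rpow, ← Real.rpow_natCast ((8 * Real.pi) ^ (1 / (2 : ℝ))) d,
        ← Real.rpow_mul (by positivity)]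
      ring_nf
    rw [h1]
    exact pow_le_pow_left₀ hS0 hSle d
  calc (∑' x : Fin d → ℤ,
      if r ≤ Real.sqrt (∑ i, ((x i : ℝ)) ^ 2) then
        Real.exp (-β * (∑ i, ((x i : ℝ)) ^ 2)) else 0)
      ≤ Real.exp (-β * r ^ 2 / 2) * S ^ d := step1
    _ ≤ Real.exp (-β * (r - Real.sqrt d) ^ 2 / 2) * (8 * Real.pi) ^ ((d : ℝ) / 2) := by
        apply mul_le_mul hexp hpow (by positivity) (Real.exp_pos _).le
    _ = (8 * Real.pi) ^ ((d : ℝ) / 2) * Real.exp (-β * (r - Real.sqrt d) ^ 2 / 2) :=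
        mul_comm _ _
end

section
/- Let G be a (simple) graph on n vertices with at least n²/r² edges, where r is a positive integer. Then there exist r vertices v₁,…,v_r of G such that the union of their neighbourhoods N(v₁) ∪ ⋯ ∪ N(v_r) has cardinality at least n/r. -/
open scoped BigOperators Classical

/-!
If some vertex has degree at least `n / r`, take it `r` times. Otherwise every degree is below
`n / r`, so while the covered set `S` has fewer than `n / r` vertices, the vertices outside `S`
still have degree sum at least `2 e(G) - |S| n / r ≥ n² / r²`. By double counting that sum is
`∑ v, |N(v) \ S|`, so some vertex adds at least `n / r²` new neighbours, and `r` greedy choices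
cover `min (n / r) (r · n / r²) = n / r` vertices.
-/

open Finset

theorem Finset.exists_min_le_card_biUnion {ι α : Type*} [Nonempty ι] [DecidableEq α]
    (t : ι → Finset α) {a b : ℝ}
    (h : ∀ S : Finset α, (#S : ℝ) < a → ∃ i, b ≤ #(t i \ S)) :
    ∀ k : ℕ, ∃ f : Fin k → ι, min a (k * b) ≤ #(univ.biUnion fun j => t (f j))
  | 0 => ⟨Fin.elim0, by simp⟩
  | k + 1 => by
    obtain ⟨f, hf⟩ := exists_min_le_card_biUnion t h k
    set U := univ.biUnion fun j => t (f j)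
    have hcons (i : ι) :
        univ.biUnion (fun j => t ((Fin.cons i f : Fin (k + 1) → ι) j)) = t i ∪ U := by
      ext; simp [U, Fin.exists_fin_succ]
    by_cases hU : a ≤ #U
    · obtain ⟨i⟩ := ‹Nonempty ι›
      refine ⟨Fin.cons i f, (min_le_left _ _).trans (hU.trans ?_)⟩
      rw [hcons]
      exact_mod_cast card_le_card subset_union_right
    · push Not at hU
      obtain ⟨i, hi⟩ := h U hU
      refine ⟨Fin.cons i f, ?_⟩
      -- `min a (k * b) ≤ #U < a` forces the minimum to be `k * b`
      have hkb : (k : ℝ) * b ≤ #U := by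
        rcases min_choice a (k * b) with hmin | hmin <;> rw [hmin] at hf <;> linarith
      rw [hcons, ← card_sdiff_add_card]
      push_cast
      linarith [min_le_right a ((k + 1) * b)]

namespace SimpleGraph

variable {V : Type*} [Fintype V] [DecidableEq V] (G : SimpleGraph V) [DecidableRel G.Adj]

theorem sum_card_neighborFinset_sdiff (S : Finset V) :
    ∑ v, #(G.neighborFinset v \ S) = ∑ w ∈ Sᶜ, G.degree w := by
  convert sum_card_bipartiteAbove_eq_sum_card_bipartiteBelow (r := G.Adj) (s := univ) (t := Sᶜ)
    using 2 with v _ w _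
  · congr 1; ext; simp [bipartiteAbove, and_comm]
  · rw [← card_neighborFinset_eq_degree]; congr 1; ext; simp [bipartiteBelow, adj_comm]

theorem exists_sum_degree_compl_le [Nonempty V] (S : Finset V) :
    ∃ v, ∑ w ∈ Sᶜ, G.degree w ≤ Fintype.card V * #(G.neighborFinset v \ S) := by
  obtain ⟨v, -, hv⟩ := exists_max_image univ (fun v => #(G.neighborFinset v \ S)) univ_nonempty
  refine ⟨v, ?_⟩
  rw [← sum_card_neighborFinset_sdiff, ← smul_eq_mul]
  exact sum_le_card_nsmul _ _ _ fun w _ => hv w (mem_univ w)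

theorem exists_two_mul_card_edgeFinset_le [Nonempty V] {D : ℝ}
    (hD : ∀ v, (G.degree v : ℝ) ≤ D) (S : Finset V) :
    ∃ v, 2 * (#G.edgeFinset : ℝ) ≤ #S * D + Fintype.card V * #(G.neighborFinset v \ S) := by
  obtain ⟨v, hv⟩ := G.exists_sum_degree_compl_le S
  refine ⟨v, ?_⟩
  have hS : ∑ w ∈ S, (G.degree w : ℝ) ≤ #S * D := by
    simpa using sum_le_card_nsmul S _ D fun w _ => hD w
  have hsplit :
      2 * (#G.edgeFinset : ℝ) =
        ∑ w ∈ S, (G.degree w : ℝ) + ∑ w ∈ Sᶜ, (G.degree w : ℝ) := by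
    rw [sum_add_sum_compl]; exact_mod_cast G.sum_degrees_eq_twice_card_edges.symm
  have hSc : ∑ w ∈ Sᶜ, (G.degree w : ℝ) ≤ Fintype.card V * #(G.neighborFinset v \ S) := by
    exact_mod_cast hv
  linarith

end SimpleGraph

theorem stmt_1 (n r : ℕ) (hn : 0 < n) (hr : 0 < r)
    (G : SimpleGraph (Fin n))
    (hE : ((n : ℝ) ^ 2 / (r : ℝ) ^ 2) ≤ (G.edgeFinset.card : ℝ)) :
    ∃ v : Fin r → Fin n,
      (n : ℝ) / (r : ℝ)
        ≤ ((Finset.univ.biUnion (fun i : Fin r => G.neighborFinset (v i))).card : ℝ) := by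
  have : Nonempty (Fin n) := ⟨⟨0, hn⟩⟩
  have hn' : (0 : ℝ) < n := by exact_mod_cast hn
  have hr' : (0 : ℝ) < r := by exact_mod_cast hr
  by_cases hΔ : ∃ v, (n : ℝ) / r ≤ G.degree v
  · obtain ⟨v, hv⟩ := hΔ
    refine ⟨fun _ => v, hv.trans ?_⟩
    rw [← G.card_neighborFinset_eq_degree]
    exact_mod_cast card_le_card
      (subset_biUnion_of_mem (fun _ : Fin r => G.neighborFinset v) (mem_univ (⟨0, hr⟩ : Fin r)))
  push Not at hΔ
  have hgain (S : Finset (Fin n)) (hS : (#S : ℝ) < n / r) :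
      ∃ v, (n : ℝ) / r ^ 2 ≤ #(G.neighborFinset v \ S) := by
    obtain ⟨v, hv⟩ := G.exists_two_mul_card_edgeFinset_le (fun v => (hΔ v).le) S
    refine ⟨v, le_of_mul_le_mul_left ?_ hn'⟩
    rw [Fintype.card_fin] at hv
    have : (#S : ℝ) * (n / r) ≤ n / r * (n / r) := by gcongr
    have hsq : (n : ℝ) / r * (n / r) = n * (n / r ^ 2) := by ring
    have hsq' : (n : ℝ) ^ 2 / r ^ 2 = n / r * (n / r) := by ring
    linarith
  obtain ⟨v, hv⟩ := exists_min_le_card_biUnion (fun v => G.neighborFinset v) hgain r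
  refine ⟨v, ?_⟩
  rwa [show (r : ℝ) * (n / r ^ 2) = n / r by field_simp, min_self] at hv
end

section
/- Let F : ℝ^d → ℝ⁺ be a continuous, integrable, radial function whose radial profile F_rad is non-increasing, let r ∈ ℝ, and let 𝓛 ⊆ ℤ^d be a set of lattice points all of whose coordinates are non-zero. Then the sum of F(x) over x ∈ 𝓛 with ‖x‖ ≥ r is at most the integral of F over the complement of the open ball B(0, r − √d) in ℝ^d. -/
/-!
Attach to every lattice point `x` with non-zero coordinates the unit cube `Q x` spanned by `x` and
`x - sign x`. These cubes are pairwise disjoint, every point `u ∈ Q x` satisfies `|u i| ≤ |x i|`,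
so that `F x ≤ F u` by radial monotonicity and hence `F x ≤ ∫_{Q x} F`, and `u` lies within
distance `√d` of `x`, so that `Q x` avoids `B(0, r - √d)` when `‖x‖ ≥ r`. Summing over `x`
bounds the lattice sum by the integral of `F` over the disjoint union of the cubes.
-/

open MeasureTheory Set Function

section EuclideanNorm

variable {ι : Type*} [Fintype ι]

theorem sqrt_sum_sq_eq_norm_toLp (u : ι → ℝ) : √(∑ i, u i ^ 2) = ‖WithLp.toLp 2 u‖ := by
  simp [EuclideanSpace.norm_eq]

theorem sqrt_sum_sq_mono {u v : ι → ℝ} (h : ∀ i, |u i| ≤ |v i|) :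
    √(∑ i, u i ^ 2) ≤ √(∑ i, v i ^ 2) :=
  Real.sqrt_le_sqrt (Finset.sum_le_sum fun i _ => sq_le_sq.mpr (h i))

theorem sqrt_sum_sq_le_add_sqrt_sum_sq_sub (u v : ι → ℝ) :
    √(∑ i, v i ^ 2) ≤ √(∑ i, u i ^ 2) + √(∑ i, (v i - u i) ^ 2) := by
  simp only [sqrt_sum_sq_eq_norm_toLp]
  exact norm_le_insert' (WithLp.toLp 2 v) (WithLp.toLp 2 u)

theorem sqrt_sum_sq_le_sqrt_card {w : ι → ℝ} (h : ∀ i, |w i| ≤ 1) :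
    √(∑ i, w i ^ 2) ≤ √(Fintype.card ι) := by
  gcongr
  calc ∑ i, w i ^ 2 ≤ ∑ _i : ι, (1 : ℝ) :=
        Finset.sum_le_sum fun i _ => (sq_le_one_iff_abs_le_one (w i)).mpr (h i)
    _ = Fintype.card ι := by simp

end EuclideanNorm

/-- For `n ≠ 0`, `[innerCorner n, innerCorner n + 1]` is the unit interval between `n` and
`n - sign n`. -/
def innerCorner (n : ℤ) : ℤ := if n < 0 then n else n - 1

theorem innerCorner_injOn : InjOn innerCorner {n | n ≠ 0} := by
  intro m hm n hn h
  simp only [innerCorner] at h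
  split_ifs at h <;> grind

theorem abs_le_of_mem_Ico_innerCorner {n : ℤ} (hn : n ≠ 0) {u : ℝ}
    (hu : u ∈ Ico (innerCorner n : ℝ) (innerCorner n + 1)) :
    |u| ≤ |(n : ℝ)| ∧ |(n : ℝ) - u| ≤ 1 := by
  simp only [innerCorner, mem_Ico] at hu
  split_ifs at hu with hneg
  · have : (n : ℝ) ≤ -1 := by exact_mod_cast (by omega : n ≤ -1)
    rw [abs_of_neg (by linarith : (n : ℝ) < 0)]
    exact ⟨abs_le.mpr ⟨by linarith, by linarith⟩, abs_le.mpr ⟨by linarith, by linarith⟩⟩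
  · have : (1 : ℝ) ≤ n := by exact_mod_cast (by omega : 1 ≤ n)
    push_cast at hu
    rw [abs_of_pos (by linarith : (0 : ℝ) < n)]
    exact ⟨abs_le.mpr ⟨by linarith, by linarith⟩, abs_le.mpr ⟨by linarith, by linarith⟩⟩

section InnerCube

variable {ι : Type*}

def innerCube (x : ι → ℤ) : Set (ι → ℝ) :=
  univ.pi fun i => Ico (innerCorner (x i) : ℝ) (innerCorner (x i) + 1)

theorem measurableSet_innerCube [Countable ι] (x : ι → ℤ) : MeasurableSet (innerCube x) :=
  .univ_pi fun _ => measurableSet_Ico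

theorem volume_innerCube [Fintype ι] (x : ι → ℤ) : volume (innerCube x) = 1 := by
  simp [innerCube, volume_pi_pi, Real.volume_Ico]

theorem pairwiseDisjoint_innerCube : {x : ι → ℤ | ∀ i, x i ≠ 0}.PairwiseDisjoint innerCube := by
  intro x hx y hy hxy
  obtain ⟨i, hi⟩ := Function.ne_iff.mp hxy
  have hcorner : innerCorner (x i) ≠ innerCorner (y i) :=
    fun h => hi (innerCorner_injOn (hx i) (hy i) h)
  refine Set.disjoint_left.mpr fun u hux huy => ?_
  have hux := mem_Ico.mp (hux i (mem_univ i))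
  have huy := mem_Ico.mp (huy i (mem_univ i))
  rcases hcorner.lt_or_gt with h | h
  · have : (innerCorner (x i) : ℝ) + 1 ≤ innerCorner (y i) := by exact_mod_cast h
    linarith
  · have : (innerCorner (y i) : ℝ) + 1 ≤ innerCorner (x i) := by exact_mod_cast h
    linarith

variable [Fintype ι] {x : ι → ℤ} (hx : ∀ i, x i ≠ 0) {u : ι → ℝ} (hu : u ∈ innerCube x)
include hx hu

theorem sqrt_sum_sq_le_of_mem_innerCube :
    √(∑ i, u i ^ 2) ≤ √(∑ i, (x i : ℝ) ^ 2) :=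
  sqrt_sum_sq_mono fun i => (abs_le_of_mem_Ico_innerCorner (hx i) (hu i (mem_univ i))).1

theorem sqrt_sum_sq_sub_sqrt_card_le_of_mem_innerCube :
    √(∑ i, (x i : ℝ) ^ 2) - √(Fintype.card ι) ≤ √(∑ i, u i ^ 2) := by
  have := sqrt_sum_sq_le_add_sqrt_sum_sq_sub u (fun i => (x i : ℝ))
  have := sqrt_sum_sq_le_sqrt_card fun i =>
    (abs_le_of_mem_Ico_innerCorner (hx i) (hu i (mem_univ i))).2
  linarith

omit hu in
theorem le_setIntegral_innerCube {F : (ι → ℝ) → ℝ} (hF : IntegrableOn F (innerCube x))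
    (hFrad : ∀ u v : ι → ℝ, √(∑ i, u i ^ 2) ≤ √(∑ i, v i ^ 2) → F v ≤ F u) :
    F (fun i => (x i : ℝ)) ≤ ∫ u in innerCube x, F u := by
  have := setIntegral_ge_of_const_le_real (measurableSet_innerCube x)
    (by simp [volume_innerCube])
    (fun u hu => hFrad _ _ (sqrt_sum_sq_le_of_mem_innerCube hx hu)) hF
  simpa [measureReal_def, volume_innerCube] using this

end InnerCube

theorem tsum_le_setIntegral_of_pairwise_disjoint {X ι : Type*} [MeasurableSpace X] [Countable ι]
    {μ : Measure X} {f : X → ℝ} {t : Set X} (hf : 0 ≤ᵐ[μ.restrict t] f)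
    (hfi : IntegrableOn f t μ) {s : ι → Set X} (hm : ∀ i, MeasurableSet (s i))
    (hd : Pairwise (Disjoint on s)) (hst : ∀ i, s i ⊆ t) {a : ι → ℝ} (ha : ∀ i, 0 ≤ a i)
    (hle : ∀ i, a i ≤ ∫ x in s i, f x ∂μ) :
    ∑' i, a i ≤ ∫ x in t, f x ∂μ := by
  have hsum := hasSum_integral_iUnion hm hd (hfi.mono_set (iUnion_subset hst))
  calc ∑' i, a i ≤ ∑' i, ∫ x in s i, f x ∂μ :=
        Summable.tsum_le_tsum hle (.of_nonneg_of_le ha hle hsum.summable) hsum.summable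
    _ = ∫ x in ⋃ i, s i, f x ∂μ := hsum.tsum_eq
    _ ≤ ∫ x in t, f x ∂μ := setIntegral_mono_set hfi hf (.of_forall (iUnion_subset hst))

theorem stmt_2_general (d : ℕ) (r : ℝ)
    (F : (Fin d → ℝ) → ℝ) (hFpos : ∀ u, 0 ≤ F u)
    (hFint : Integrable F)
    (hFrad : ∀ u v : Fin d → ℝ,
      Real.sqrt (∑ i, u i ^ 2) ≤ Real.sqrt (∑ i, v i ^ 2) → F v ≤ F u)
    (L : Set (Fin d → ℤ)) (hL : ∀ x ∈ L, ∀ i, x i ≠ 0) :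
    (∑' x : L, if r ≤ Real.sqrt (∑ i, ((x.1 i : ℝ)) ^ 2) then F (fun i => (x.1 i : ℝ)) else 0)
    ≤ ∫ u in {u : Fin d → ℝ | r - Real.sqrt d ≤ Real.sqrt (∑ i, u i ^ 2)}, F u := by
  set L' : Set (Fin d → ℤ) := {x | x ∈ L ∧ r ≤ √(∑ i, (x i : ℝ) ^ 2)}
  have hsum_restrict :
      (∑' x : L, if r ≤ √(∑ i, (x.1 i : ℝ) ^ 2) then F (fun i => (x.1 i : ℝ)) else 0) =
        ∑' x : L', F (fun i => (x.1 i : ℝ)) := by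
    rw [tsum_subtype L (fun x => if r ≤ √(∑ i, (x i : ℝ) ^ 2) then F (fun i => (x i : ℝ)) else 0),
      tsum_subtype L' (fun x => F (fun i => (x i : ℝ)))]
    refine tsum_congr fun x => ?_
    by_cases hx : x ∈ L <;> by_cases hr : r ≤ √(∑ i, (x i : ℝ) ^ 2) <;> simp [L', hx, hr]
  rw [hsum_restrict]
  refine tsum_le_setIntegral_of_pairwise_disjoint (s := fun x : L' => innerCube x.1)
    (.of_forall hFpos) hFint.integrableOn (fun x => measurableSet_innerCube x.1) ?_ ?_
    (fun x => hFpos _) (fun x => le_setIntegral_innerCube (hL _ x.2.1) hFint.integrableOn hFrad)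
  · intro x y hxy
    exact pairwiseDisjoint_innerCube (hL _ x.2.1) (hL _ y.2.1) (Subtype.coe_injective.ne hxy)
  · intro x u hu
    have := sqrt_sum_sq_sub_sqrt_card_le_of_mem_innerCube (hL _ x.2.1) hu
    rw [Fintype.card_fin] at this
    exact (sub_le_sub_right x.2.2 _).trans this

theorem stmt_2 (d : ℕ) (hd : 0 < d) (r : ℝ)
    (F : (Fin d → ℝ) → ℝ) (hFpos : ∀ u, 0 ≤ F u)
    (hFcont : Continuous F) (hFint : Integrable F)
    (hFrad : ∀ u v : Fin d → ℝ,
      Real.sqrt (∑ i, u i ^ 2) ≤ Real.sqrt (∑ i, v i ^ 2) → F v ≤ F u)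
    (L : Set (Fin d → ℤ)) (hL : ∀ x ∈ L, ∀ i, x i ≠ 0) :
    (∑' x : L, if r ≤ Real.sqrt (∑ i, ((x.1 i : ℝ)) ^ 2) then F (fun i => (x.1 i : ℝ)) else 0)
    ≤ ∫ u in {u : Fin d → ℝ | r - Real.sqrt d ≤ Real.sqrt (∑ i, u i ^ 2)}, F u :=
  stmt_2_general d r F hFpos hFint hFrad L hL
end

section
/- Let (S_i)_{i=0}^m be a supermartingale with increments X_i = S_i − S_{i−1} with respect to a filtration (ℱ_i), suppose |X_i| ≤ R almost surely for all i, and let V(k) = Σ_{i=1}^{k} E[X_i² | ℱ_{i−1}]. Then for every α, β > 0, the probability that there exists k ≤ m with S_k − S_0 ≥ α and V(k) ≤ β is at most exp(−α²/(2(β + Rα))). -/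
/-!
With `λ = α / (β + R α)` and `c = λ² / (2 (1 - λ R))`, the elementary bound
`exp t ≤ 1 + t + t² / (2 (1 - λ R))` for `t ≤ λ R`, applied conditionally to `t = λ X_{k+1}`,
makes `Z_k = exp (λ (S_k - S_0) - c V(k))` a positive supermartingale with `Z_0 = 1`.
On the event in question some `Z_k ≥ exp (λ α - c β) = exp (α² / (2 (β + R α)))`. Stopping `Z`
when it first reaches this level gives, by optional stopping, a variable of mean at most `Z_0 = 1`
that exceeds the level on the event, and Markov's inequality concludes.
-/

open MeasureTheory

namespace Real

lemma exp_le_quadratic_of_nonpos {t : ℝ} (ht : t ≤ 0) : exp t ≤ 1 + t + t ^ 2 / 2 := by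
  have hmono : MonotoneOn (fun u => exp u - (1 + u + u ^ 2 / 2)) (Set.Iic 0) := by
    refine monotoneOn_of_hasDerivWithinAt_nonneg (f' := fun u => exp u - (1 + u))
      (convex_Iic 0) (by fun_prop) (fun u _ => ?_) (fun u _ => by linarith [add_one_le_exp u])
    have := (hasDerivAt_exp u).sub (((hasDerivAt_id u).const_add 1).add
      ((hasDerivAt_pow 2 u).div_const 2))
    exact (this.congr_deriv (by ring)).hasDerivWithinAt
  simpa using hmono ht (Set.mem_Iic.2 le_rfl) ht

lemma exp_le_one_add_add_sq_div_of_nonneg_of_lt_one {t : ℝ} (h0 : 0 ≤ t) (h1 : t < 1) :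
    exp t ≤ 1 + t + t ^ 2 / (2 * (1 - t)) := by
  have hmono : MonotoneOn (fun u => u ^ 2 / 2 - (1 - u) * (exp u - 1 - u)) (Set.Ici 0) := by
    refine monotoneOn_of_hasDerivWithinAt_nonneg (f' := fun u => u * (exp u - 1))
      (convex_Ici 0) (by fun_prop) (fun u _ => ?_) (fun u hu => ?_)
    · have := ((hasDerivAt_pow 2 u).div_const 2).sub (((hasDerivAt_id u).const_sub 1).mul
        (((hasDerivAt_exp u).sub_const 1).sub (hasDerivAt_id u)))
      exact (this.congr_deriv (by simp only [Pi.sub_apply, id]; ring)).hasDerivWithinAt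
    · rw [interior_Ici] at hu
      exact mul_nonneg (le_of_lt hu) (by linarith [one_le_exp (le_of_lt hu)])
  have key := hmono (Set.mem_Ici.2 le_rfl) h0 h0
  simp only [exp_zero] at key
  have h1t : 1 - t ≠ 0 := by linarith
  rw [← sub_nonneg, show 1 + t + t ^ 2 / (2 * (1 - t)) - exp t
    = (t ^ 2 / 2 - (1 - t) * (exp t - 1 - t)) / (1 - t) by field_simp; ring]
  exact div_nonneg (by linarith) (by linarith)

lemma exp_le_one_add_add_sq_div_of_le {t s : ℝ} (hts : t ≤ s) (hs0 : 0 ≤ s) (hs1 : s < 1) :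
    exp t ≤ 1 + t + t ^ 2 / (2 * (1 - s)) := by
  rcases le_or_gt t 0 with ht | ht
  · calc exp t ≤ 1 + t + t ^ 2 / 2 := exp_le_quadratic_of_nonpos ht
      _ ≤ 1 + t + t ^ 2 / (2 * (1 - s)) := by
        gcongr
        linarith
  · calc exp t ≤ 1 + t + t ^ 2 / (2 * (1 - t)) :=
          exp_le_one_add_add_sq_div_of_nonneg_of_lt_one ht.le (hts.trans_lt hs1)
      _ ≤ 1 + t + t ^ 2 / (2 * (1 - s)) := by gcongr

end Real

section OneStep

variable {Ω : Type*} {m m0 : MeasurableSpace Ω} {μ : Measure Ω} [IsFiniteMeasure μ]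

lemma integrable_exp_mul_of_abs_le {X : Ω → ℝ} {R : ℝ} (hXm : AEStronglyMeasurable X μ)
    (hX : ∀ᵐ ω ∂μ, |X ω| ≤ R) (l : ℝ) : Integrable (fun ω => Real.exp (l * X ω)) μ :=
  .of_bound (Real.continuous_exp.comp_aestronglyMeasurable (hXm.const_mul l)) (Real.exp (|l| * R))
    (by
      filter_upwards [hX] with ω h
      rw [Real.norm_of_nonneg (Real.exp_pos _).le, Real.exp_le_exp]
      exact (le_abs_self _).trans (abs_mul l (X ω) ▸ mul_le_mul_of_nonneg_left h (abs_nonneg l)))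

lemma condExp_exp_mul_le (hm : m ≤ m0) {X : Ω → ℝ} {R l : ℝ} (hXm : AEStronglyMeasurable X μ)
    (hX : ∀ᵐ ω ∂μ, |X ω| ≤ R) (hXcond : μ[X | m] ≤ᵐ[μ] 0) (hl : 0 ≤ l) (hR : 0 ≤ R)
    (hlR : l * R < 1) :
    μ[fun ω => Real.exp (l * X ω) | m]
      ≤ᵐ[μ] fun ω => 1 + l ^ 2 / (2 * (1 - l * R)) * μ[fun ω => X ω ^ 2 | m] ω := by
  set c := l ^ 2 / (2 * (1 - l * R))
  have hXint : Integrable X μ := .of_bound hXm R (by simpa using hX)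
  have hX2int : Integrable (fun ω => X ω ^ 2) μ :=
    .of_bound (hXm.pow 2) (R ^ 2) (by
      filter_upwards [hX] with ω h
      simpa using pow_le_pow_left₀ (abs_nonneg _) h 2)
  have hEint := integrable_exp_mul_of_abs_le hXm hX l
  set Q : Ω → ℝ := (fun _ => 1) + l • X + c • fun ω => X ω ^ 2
  have hQint : Integrable Q μ :=
    ((integrable_const 1).add (hXint.smul l)).add (hX2int.smul c)
  have hQ : μ[Q | m] =ᵐ[μ] fun ω => 1 + l * μ[X | m] ω + c * μ[fun ω => X ω ^ 2 | m] ω := by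
    filter_upwards [condExp_add ((integrable_const 1).add (hXint.smul l)) (hX2int.smul c) m,
      condExp_add (integrable_const 1) (hXint.smul l) m,
      condExp_smul l X m, condExp_smul c (fun ω => X ω ^ 2) m] with ω h1 h2 h3 h4
    simp [Q, h1, h2, h3, h4, condExp_const hm]
  have hmono : μ[fun ω => Real.exp (l * X ω) | m] ≤ᵐ[μ] μ[Q | m] := by
    refine condExp_mono hEint hQint ?_
    filter_upwards [hX] with ω h
    have := Real.exp_le_one_add_add_sq_div_of_le
      (mul_le_mul_of_nonneg_left ((le_abs_self _).trans h) hl) (mul_nonneg hl hR) hlR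
    simp only [Q, Pi.add_apply, Pi.smul_apply, smul_eq_mul]
    linarith [show (l * X ω) ^ 2 / (2 * (1 - l * R)) = c * X ω ^ 2 by ring]
  filter_upwards [hmono, hQ, hXcond] with ω h1 h2 h3
  rw [h2] at h1
  nlinarith [show μ[X | m] ω ≤ 0 from h3]

end OneStep

lemma MeasureTheory.Supermartingale.condExp_sub_nonpos {Ω : Type*} {m0 : MeasurableSpace Ω}
    {μ : Measure Ω} {ℱ : Filtration ℕ m0} {S : ℕ → Ω → ℝ} [SigmaFiniteFiltration μ ℱ]
    (hS : Supermartingale S ℱ μ) {i j : ℕ} (hij : i ≤ j) :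
    μ[S j - S i | ℱ i] ≤ᵐ[μ] 0 := by
  filter_upwards [condExp_sub (hS.integrable j) (hS.integrable i) (ℱ i), hS.condExp_ae_le hij]
    with ω h1 h2
  rw [h1, Pi.sub_apply, condExp_of_stronglyMeasurable (ℱ.le i) (hS.stronglyAdapted i)
    (hS.integrable i), Pi.zero_apply]
  linarith

section Freedman

variable {Ω : Type*} {m0 : MeasurableSpace Ω} (μ : Measure Ω) (ℱ : Filtration ℕ m0)
  (S : ℕ → Ω → ℝ)

/-- `V(k)`. -/
noncomputable def condSqIncrSum (k : ℕ) (ω : Ω) : ℝ :=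
  ∑ i ∈ Finset.range k, μ[fun ω' => (S (i + 1) ω' - S i ω') ^ 2 | ℱ i] ω

/-- `Z_k`, with `λ` written `l`. -/
noncomputable def freedmanExp (l c : ℝ) (k : ℕ) (ω : Ω) : ℝ :=
  Real.exp (l * (S k ω - S 0 ω) - c * condSqIncrSum μ ℱ S k ω)

variable {μ ℱ S}

lemma stronglyAdapted_condSqIncrSum : StronglyAdapted ℱ (condSqIncrSum μ ℱ S) := fun _ =>
  Finset.stronglyMeasurable_fun_sum _ fun _ hi =>
    stronglyMeasurable_condExp.mono (ℱ.mono (Finset.mem_range.1 hi).le)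

lemma condSqIncrSum_nonneg : ∀ᵐ ω ∂μ, ∀ k, 0 ≤ condSqIncrSum μ ℱ S k ω := by
  have := ae_all_iff.2 fun i => condExp_nonneg (m := ℱ i) (μ := μ)
    (f := fun ω' => (S (i + 1) ω' - S i ω') ^ 2) (.of_forall fun _ => sq_nonneg _)
  filter_upwards [this] with ω h k
  exact Finset.sum_nonneg fun i _ => h i

lemma stronglyAdapted_freedmanExp (hS : StronglyAdapted ℱ S) (l c : ℝ) :
    StronglyAdapted ℱ (freedmanExp μ ℱ S l c) := fun k =>
  Real.continuous_exp.comp_stronglyMeasurable <|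
    (((hS k).sub ((hS 0).mono (ℱ.mono k.zero_le))).const_mul l).sub
      ((stronglyAdapted_condSqIncrSum k).const_mul c)

lemma freedmanExp_pos (l c : ℝ) (k : ℕ) (ω : Ω) : 0 < freedmanExp μ ℱ S l c k ω :=
  Real.exp_pos _

@[simp]
lemma freedmanExp_zero (l c : ℝ) : freedmanExp μ ℱ S l c 0 = 1 :=
  funext fun _ => by simp [freedmanExp, condSqIncrSum]

lemma freedmanExp_succ (l c : ℝ) (k : ℕ) (ω : Ω) :
    freedmanExp μ ℱ S l c (k + 1) ω = freedmanExp μ ℱ S l c k ω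
      * Real.exp (-(c * μ[fun ω' => (S (k + 1) ω' - S k ω') ^ 2 | ℱ k] ω))
      * Real.exp (l * (S (k + 1) ω - S k ω)) := by
  simp only [freedmanExp, condSqIncrSum, Finset.sum_range_succ, ← Real.exp_add]
  ring_nf

lemma norm_freedmanExp_le {R l c : ℝ} (hbdd : ∀ i, ∀ᵐ ω ∂μ, |S (i + 1) ω - S i ω| ≤ R)
    (hl : 0 ≤ l) (hc : 0 ≤ c) (k : ℕ) :
    ∀ᵐ ω ∂μ, ‖freedmanExp μ ℱ S l c k ω‖ ≤ Real.exp (l * (k * R)) := by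
  filter_upwards [ae_all_iff.2 hbdd, condSqIncrSum_nonneg] with ω hR hV
  have hdrift : ∀ k : ℕ, S k ω - S 0 ω ≤ k * R := by
    intro k
    induction k with
    | zero => simp
    | succ k ih => push_cast; linarith [le_of_abs_le (hR k)]
  rw [Real.norm_of_nonneg (freedmanExp_pos l c k ω).le, freedmanExp]
  gcongr
  nlinarith [hdrift k, hV k]

end Freedman

section Supermartingale

variable {Ω : Type*} {m0 : MeasurableSpace Ω} {μ : Measure Ω} [IsFiniteMeasure μ]
  {ℱ : Filtration ℕ m0} {S : ℕ → Ω → ℝ} {R l : ℝ}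

lemma condExp_freedmanExp_succ_le (hS : Supermartingale S ℱ μ)
    (hbdd : ∀ i, ∀ᵐ ω ∂μ, |S (i + 1) ω - S i ω| ≤ R) (hl : 0 ≤ l) (hR : 0 ≤ R)
    (hlR : l * R < 1) (k : ℕ) :
    μ[freedmanExp μ ℱ S l (l ^ 2 / (2 * (1 - l * R))) (k + 1) | ℱ k]
      ≤ᵐ[μ] freedmanExp μ ℱ S l (l ^ 2 / (2 * (1 - l * R))) k := by
  set c := l ^ 2 / (2 * (1 - l * R))
  have hc : 0 ≤ c := div_nonneg (sq_nonneg l) (by linarith)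
  set X := S (k + 1) - S k
  set W := μ[fun ω => X ω ^ 2 | ℱ k]
  set G := fun ω => freedmanExp μ ℱ S l c k ω * Real.exp (-(c * W ω))
  have hXm : StronglyMeasurable X :=
    ((hS.stronglyAdapted (k + 1)).sub ((hS.stronglyAdapted k).mono (ℱ.mono k.le_succ))).mono
      (ℱ.le _)
  have hW : 0 ≤ᵐ[μ] W := condExp_nonneg (.of_forall fun _ => sq_nonneg _)
  have hG_meas : StronglyMeasurable[ℱ k] G :=
    (stronglyAdapted_freedmanExp hS.stronglyAdapted l c k).mul
      (Real.continuous_exp.comp_stronglyMeasurable (stronglyMeasurable_condExp.const_mul c).neg)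
  have hG_bdd : ∀ᵐ ω ∂μ, ‖G ω‖ ≤ Real.exp (l * (k * R)) := by
    filter_upwards [norm_freedmanExp_le (ℱ := ℱ) hbdd hl hc k, hW] with ω h hWω
    rw [norm_mul, Real.norm_of_nonneg (Real.exp_pos _).le]
    refine (mul_le_of_le_one_right (norm_nonneg _) ?_).trans h
    exact Real.exp_le_one_iff.2 (neg_nonpos.2 (mul_nonneg hc hWω))
  have hpull : μ[freedmanExp μ ℱ S l c (k + 1) | ℱ k]
      =ᵐ[μ] G * μ[fun ω => Real.exp (l * X ω) | ℱ k] := by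
    rw [show freedmanExp μ ℱ S l c (k + 1) = G * fun ω => Real.exp (l * X ω) from
      funext (freedmanExp_succ l c k)]
    exact condExp_stronglyMeasurable_mul_of_bound (ℱ.le k) hG_meas
      (integrable_exp_mul_of_abs_le hXm.aestronglyMeasurable (hbdd k) l) _ hG_bdd
  filter_upwards [hpull, condExp_exp_mul_le (ℱ.le k) hXm.aestronglyMeasurable (hbdd k)
    (hS.condExp_sub_nonpos k.le_succ) hl hR hlR, hW] with ω hpullω hstep hWω
  rw [hpullω, Pi.mul_apply]
  have hG : 0 ≤ G ω := mul_nonneg (freedmanExp_pos l c k ω).le (Real.exp_pos _).le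
  calc G ω * μ[fun ω => Real.exp (l * X ω) | ℱ k] ω ≤ G ω * (1 + c * W ω) :=
        mul_le_mul_of_nonneg_left hstep hG
    _ = freedmanExp μ ℱ S l c k ω * (Real.exp (-(c * W ω)) * (1 + c * W ω)) := mul_assoc _ _ _
    _ ≤ freedmanExp μ ℱ S l c k ω := by
        refine mul_le_of_le_one_right (freedmanExp_pos l c k ω).le ?_
        rw [Real.exp_neg, inv_mul_le_one₀ (Real.exp_pos _), add_comm]
        exact Real.add_one_le_exp _

lemma supermartingale_freedmanExp (hS : Supermartingale S ℱ μ)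
    (hbdd : ∀ i, ∀ᵐ ω ∂μ, |S (i + 1) ω - S i ω| ≤ R) (hl : 0 ≤ l) (hR : 0 ≤ R)
    (hlR : l * R < 1) :
    Supermartingale (freedmanExp μ ℱ S l (l ^ 2 / (2 * (1 - l * R)))) ℱ μ := by
  have hc : 0 ≤ l ^ 2 / (2 * (1 - l * R)) := div_nonneg (sq_nonneg l) (by linarith)
  have hadapted := stronglyAdapted_freedmanExp (μ := μ) hS.stronglyAdapted l
    (l ^ 2 / (2 * (1 - l * R)))
  exact supermartingale_nat hadapted
    (fun k => .of_bound ((hadapted k).mono (ℱ.le k)).aestronglyMeasurable _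
      (norm_freedmanExp_le hbdd hl hc k))
    (condExp_freedmanExp_succ_le hS hbdd hl hR hlR)

end Supermartingale

lemma MeasureTheory.Supermartingale.mul_measureReal_exists_ge_le_integral_zero {Ω : Type*}
    {m0 : MeasurableSpace Ω} {μ : Measure Ω} [IsFiniteMeasure μ] {ℱ : Filtration ℕ m0}
    {Z : ℕ → Ω → ℝ} (hZ : Supermartingale Z ℱ μ) (hnonneg : ∀ k ω, 0 ≤ Z k ω) (a : ℝ) (m : ℕ) :
    a * μ.real {ω | ∃ k ≤ m, a ≤ Z k ω} ≤ ∫ ω, Z 0 ω ∂μ := by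
  set A := {ω | ∃ k ≤ m, a ≤ Z k ω}
  set T : Ω → WithTop ℕ := fun ω => (hittingBtwn Z (Set.Ici a) 0 m ω : ℕ)
  have hT : IsStoppingTime ℱ T :=
    hZ.stronglyAdapted.adapted.isStoppingTime_hittingBtwn measurableSet_Ici
  have hTm ω : T ω ≤ m := WithTop.coe_le_coe.2 (hittingBtwn_le ω)
  have hA : MeasurableSet A := by
    simp only [A, Set.ofPred_exists, Set.ofPred_and]
    exact .iUnion fun k => (MeasurableSet.const _).inter
      (measurableSet_le measurable_const ((hZ.stronglyAdapted k).mono (ℱ.le k)).measurable)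
  have hint : Integrable (stoppedValue Z T) μ := integrable_stoppedValue ℕ hT hZ.integrable hTm
  have hstop_ge : ∀ ω ∈ A, a ≤ stoppedValue Z T ω := fun ω ⟨k, hk, hak⟩ =>
    stoppedValue_hittingBtwn_mem ⟨k, ⟨k.zero_le, hk⟩, hak⟩
  have hoptional : ∫ ω, stoppedValue Z T ω ∂μ ≤ ∫ ω, Z 0 ω ∂μ := by
    have := hZ.neg.expected_stoppedValue_mono (isStoppingTime_const ℱ 0) hT
      (fun _ => zero_le) hTm
    simpa [stoppedValue, integral_neg] using this
  calc a * μ.real A ≤ ∫ ω in A, stoppedValue Z T ω ∂μ :=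
        setIntegral_ge_of_const_le_real hA (measure_ne_top μ A) hstop_ge hint.integrableOn
    _ ≤ ∫ ω, stoppedValue Z T ω ∂μ :=
        setIntegral_le_integral hint (.of_forall fun ω => hnonneg _ ω)
    _ ≤ ∫ ω, Z 0 ω ∂μ := hoptional

lemma measureReal_exists_sub_ge_and_condSqIncrSum_le_le {Ω : Type*} {m0 : MeasurableSpace Ω}
    {μ : Measure Ω} [IsProbabilityMeasure μ] {ℱ : Filtration ℕ m0} {S : ℕ → Ω → ℝ} {R l : ℝ}
    (hS : Supermartingale S ℱ μ) (hbdd : ∀ i, ∀ᵐ ω ∂μ, |S (i + 1) ω - S i ω| ≤ R)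
    (hl : 0 ≤ l) (hR : 0 ≤ R) (hlR : l * R < 1) (m : ℕ) (α β : ℝ) :
    μ.real {ω | ∃ k ≤ m, α ≤ S k ω - S 0 ω ∧ condSqIncrSum μ ℱ S k ω ≤ β}
      ≤ Real.exp (-(l * α - l ^ 2 / (2 * (1 - l * R)) * β)) := by
  set c := l ^ 2 / (2 * (1 - l * R))
  have hc : 0 ≤ c := div_nonneg (sq_nonneg l) (by linarith)
  have hevent : {ω | ∃ k ≤ m, α ≤ S k ω - S 0 ω ∧ condSqIncrSum μ ℱ S k ω ≤ β}
      ⊆ {ω | ∃ k ≤ m, Real.exp (l * α - c * β) ≤ freedmanExp μ ℱ S l c k ω} := by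
    rintro ω ⟨k, hk, hdrift, hV⟩
    refine ⟨k, hk, Real.exp_le_exp.2 ?_⟩
    nlinarith [mul_le_mul_of_nonneg_left hdrift hl, mul_le_mul_of_nonneg_left hV hc]
  have hmaximal := (supermartingale_freedmanExp hS hbdd hl hR hlR
    ).mul_measureReal_exists_ge_le_integral_zero (fun k ω => (freedmanExp_pos l c k ω).le)
    (Real.exp (l * α - c * β)) m
  simp only [freedmanExp_zero, Pi.one_apply, integral_const, probReal_univ, smul_eq_mul,
    mul_one] at hmaximal
  rw [Real.exp_neg, ← one_div, le_div_iff₀' (Real.exp_pos _)]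
  exact hmaximal.trans' (mul_le_mul_of_nonneg_left (measureReal_mono hevent) (Real.exp_pos _).le)

theorem stmt_7 {Ω : Type*} {m0 : MeasurableSpace Ω} (μ : Measure Ω) [IsProbabilityMeasure μ]
    (m : ℕ) (S : ℕ → Ω → ℝ) (ℱ : Filtration ℕ m0)
    (hS : Supermartingale S ℱ μ)
    (R : ℝ) (hR : 0 < R)
    (hbdd : ∀ i, ∀ᵐ ω ∂μ, |S (i + 1) ω - S i ω| ≤ R)
    (α β : ℝ) (hα : 0 < α) (hβ : 0 < β) :
    (μ {ω | ∃ k ≤ m, α ≤ S k ω - S 0 ω ∧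
        (∑ i ∈ Finset.range k,
          (μ[fun ω' => (S (i + 1) ω' - S i ω') ^ 2 | ℱ i]) ω) ≤ β}).toReal
      ≤ Real.exp (-α ^ 2 / (2 * (β + R * α))) := by
  have hβRα : 0 < β + R * α := by positivity
  set l := α / (β + R * α)
  have hl : 0 ≤ l := by positivity
  have hlR : l * R < 1 := by
    rw [div_mul_eq_mul_div, div_lt_one hβRα]
    nlinarith
  have hexponent : l * α - l ^ 2 / (2 * (1 - l * R)) * β = α ^ 2 / (2 * (β + R * α)) := by
    have : 1 - l * R = β / (β + R * α) := by simp only [l]; field_simp; ring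
    simp only [this, l]
    field_simp
    ring
  calc _ ≤ Real.exp (-(l * α - l ^ 2 / (2 * (1 - l * R)) * β)) :=
        measureReal_exists_sub_ge_and_condSqIncrSum_le_le hS hbdd hl hR.le hlR m α β
    _ = Real.exp (-α ^ 2 / (2 * (β + R * α))) := by rw [hexponent, neg_div]
end

section
/- Let n ≥ 2, N = n(n−1)/2, and fix m ≤ N. For graphs G, G' on vertex set [n] with exactly m edges, say G and G' are adjacent if G' = (G \ {e}) ∪ {e'} for some edges e, e' of the complete graph K_n. Given ψ : E(K_n) → ℝ⁺, say f : 𝒢_{n,m} → ℝ is ψ-Lipschitz if |f(G) − f(G')| ≤ ψ(e) + ψ(e') whenever G, G' are adjacent with symmetric difference {e, e'}. Then, for G_m a uniformly random graph with n vertices and m edges, t = m/N, and any ψ-Lipschitz function f, for all a ≥ 0: P(f(G_m) − E[f(G_m)] ≥ a) ≤ exp(−a² / (24·t·‖ψ‖² + 6·a·ψ_max)), where ‖ψ‖² = Σ_{e ∈ E(K_n)} ψ(e)² and ψ_max = max_e ψ(e). -/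
/-!
Expose the edges one at a time. For a set `S` of exposed edges let `g S` be the average of `f`
over the `m`-edge graphs containing `S`. The values `g (S ∪ {e})`, `e ∉ S`, average to `g S`, and
the exchange `G ↦ G - e + e'` shows that two of them differ by at most `ψ e + ψ e'`; so they
deviate from `g S` by at most `2 ψ_max` and their variance is at most `2 ‖ψ‖² / (N - |S|)`.
With `exp x ≤ 1 + x + x²` for `|x| ≤ 1`, each exposure multiplies the moment generating function
by at most `exp (2 L² ‖ψ‖² / (N - |S|))`, and `∑_{j < m} 1 / (N - j) ≤ 3t` as long as
`m ≤ 2N/3`; for larger `m` one passes to complements. Chernoff's bound with the parameter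
`L = 2a / (24 t ‖ψ‖² + 6 a ψ_max)` gives the claim.
-/

open Finset Real
open scoped BigOperators

lemma Real.exp_le_one_add_add_sq {x : ℝ} (hx : |x| ≤ 1) : exp x ≤ 1 + x + x ^ 2 := by
  linarith [(abs_le.1 (abs_exp_sub_one_sub_id_le hx)).2]

section Averages

variable {ι : Type*}

lemma card_filter_div_card_le_exp_mul_expect (s : Finset ι) (h : ι → ℝ) {a L : ℝ}
    (hL : 0 ≤ L) :
    (#(s.filter fun x => a ≤ h x) : ℝ) / #s ≤ exp (-(L * a)) * 𝔼 x ∈ s, exp (L * h x) := by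
  rw [expect_eq_sum_div_card, mul_div_assoc']
  refine div_le_div_of_nonneg_right ?_ (Nat.cast_nonneg _)
  rw [mul_sum, card_eq_sum_ones, Nat.cast_sum, sum_filter]
  refine sum_le_sum fun x _ => ?_
  split_ifs with hx
  · rw [← exp_add, Nat.cast_one, ← exp_zero]
    exact exp_le_exp.2 (by nlinarith)
  · positivity

lemma sum_sum_sub_sq (s : Finset ι) (u : ι → ℝ) :
    ∑ i ∈ s, ∑ j ∈ s, (u i - u j) ^ 2 = 2 * #s * ∑ i ∈ s, u i ^ 2 - 2 * (∑ i ∈ s, u i) ^ 2 := by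
  calc ∑ i ∈ s, ∑ j ∈ s, (u i - u j) ^ 2
      = ∑ i ∈ s, (#s * u i ^ 2 - 2 * u i * ∑ j ∈ s, u j + ∑ j ∈ s, u j ^ 2) :=
        sum_congr rfl fun i _ => by
          simp only [sub_sq, sum_add_distrib, sum_sub_distrib, sum_const, nsmul_eq_mul,
            ← mul_sum]
    _ = 2 * #s * ∑ i ∈ s, u i ^ 2 - 2 * (∑ i ∈ s, u i) ^ 2 := by
        simp only [sum_add_distrib, sum_sub_distrib, sum_const, nsmul_eq_mul, ← mul_sum,
          ← sum_mul]
        ring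

variable {s : Finset ι} {y : ι → ℝ}

lemma abs_sub_expect_le {C : ℝ} (hy : ∀ i ∈ s, ∀ j ∈ s, |y i - y j| ≤ C) {i : ι} (hi : i ∈ s) :
    |y i - 𝔼 j ∈ s, y j| ≤ C := by
  have hs : s.Nonempty := ⟨i, hi⟩
  rw [← expect_const hs (y i), ← expect_sub_distrib]
  exact (abs_expect_le _ _).trans (expect_le hs fun j hj => hy i hi j hj)

lemma sum_sq_sub_expect_le {ψ : ι → ℝ} (hy : ∀ i ∈ s, ∀ j ∈ s, |y i - y j| ≤ ψ i + ψ j) :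
    ∑ i ∈ s, (y i - 𝔼 j ∈ s, y j) ^ 2 ≤ 2 * ∑ i ∈ s, ψ i ^ 2 := by
  obtain rfl | hs := s.eq_empty_or_nonempty
  · simp
  set u : ι → ℝ := fun i => y i - 𝔼 j ∈ s, y j
  have hu : ∑ i ∈ s, u i = 0 := by
    simp only [u, sum_sub_distrib, sum_const, nsmul_eq_mul, card_mul_expect, sub_self]
  have hpair : ∑ i ∈ s, ∑ j ∈ s, (u i - u j) ^ 2 ≤ 4 * #s * ∑ i ∈ s, ψ i ^ 2 :=
    calc ∑ i ∈ s, ∑ j ∈ s, (u i - u j) ^ 2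
        ≤ ∑ i ∈ s, ∑ j ∈ s, (2 * ψ i ^ 2 + 2 * ψ j ^ 2) := by
          refine sum_le_sum fun i hi => sum_le_sum fun j hj => ?_
          have h := sq_le_sq' (abs_le.1 (hy i hi j hj)).1 (abs_le.1 (hy i hi j hj)).2
          nlinarith [sq_nonneg (ψ i - ψ j), show u i - u j = y i - y j by simp [u]]
      _ = 4 * #s * ∑ i ∈ s, ψ i ^ 2 := by
          simp only [sum_add_distrib, sum_const, nsmul_eq_mul, ← mul_sum]
          ring
  rw [sum_sum_sub_sq, hu] at hpair
  have hcard : (0 : ℝ) < #s := by exact_mod_cast hs.card_pos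
  nlinarith

lemma expect_exp_mul_sub_expect_le {ψ : ι → ℝ} {B L : ℝ} (hs : s.Nonempty)
    (hy : ∀ i ∈ s, ∀ j ∈ s, |y i - y j| ≤ ψ i + ψ j) (hB : ∀ i ∈ s, ψ i ≤ B)
    (hL₀ : 0 ≤ L) (hL₁ : L * (2 * B) ≤ 1) :
    𝔼 i ∈ s, exp (L * (y i - 𝔼 j ∈ s, y j)) ≤ exp (2 * L ^ 2 * (∑ i ∈ s, ψ i ^ 2) / #s) := by
  set u : ι → ℝ := fun i => y i - 𝔼 j ∈ s, y j
  have hcard : (0 : ℝ) < #s := by exact_mod_cast hs.card_pos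
  have hquad : ∀ i ∈ s, exp (L * u i) ≤ 1 + L * u i + L ^ 2 * u i ^ 2 := by
    intro i hi
    have hu : |u i| ≤ 2 * B := abs_sub_expect_le (fun i hi j hj =>
      (hy i hi j hj).trans (by linarith [hB i hi, hB j hj])) hi
    have := exp_le_one_add_add_sq (x := L * u i) (by
      rw [abs_mul, abs_of_nonneg hL₀]; nlinarith)
    linarith [mul_pow L (u i) 2]
  have hmean : 𝔼 i ∈ s, u i = 0 := by simp [u, expect_sub_distrib, expect_const hs]
  calc 𝔼 i ∈ s, exp (L * u i) ≤ 𝔼 i ∈ s, (1 + L * u i + L ^ 2 * u i ^ 2) := expect_le_expect hquad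
    _ = 1 + L ^ 2 * (∑ i ∈ s, u i ^ 2) / #s := by
        rw [expect_add_distrib, expect_add_distrib, expect_const hs, ← mul_expect, hmean,
          ← mul_expect, expect_eq_sum_div_card, mul_div_assoc]
        ring
    _ ≤ 1 + 2 * L ^ 2 * (∑ i ∈ s, ψ i ^ 2) / #s := by
        have := mul_le_mul_of_nonneg_left (sum_sq_sub_expect_le hy) (sq_nonneg L)
        gcongr 1 + ?_ / _
        linarith
    _ ≤ exp (2 * L ^ 2 * (∑ i ∈ s, ψ i ^ 2) / #s) := by
        linarith [add_one_le_exp (2 * L ^ 2 * (∑ i ∈ s, ψ i ^ 2) / #s)]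

end Averages

section Exchange

variable {α : Type*} [DecidableEq α] {G : Finset α} {e e' : α}

def exchange (e e' : α) (G : Finset α) : Finset α :=
  if e' ∈ G then G else insert e' (G.erase e)

lemma exchange_exchange (hee' : e ≠ e') (heG : e ∈ G) : exchange e' e (exchange e e' G) = G := by
  unfold exchange
  by_cases h : e' ∈ G
  · simp [h, heG]
  · have h' : e ∉ insert e' (G.erase e) := by simp [hee']
    simp only [h, h', if_false]
    rw [erase_insert fun h'' => h (mem_of_mem_erase h''), insert_erase heG]

lemma exchange_symmDiff (hee' : e ≠ e') (heG : e ∈ G) (he'G : e' ∉ G) :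
    G \ exchange e e' G ∪ exchange e e' G \ G = {e, e'} := by
  ext x
  simp only [exchange, he'G, if_false, mem_union, mem_sdiff, mem_insert, mem_erase,
    mem_singleton]
  by_cases hx : x = e <;> by_cases hx' : x = e' <;> simp_all

end Exchange

section Supersets

variable {α : Type*} [Fintype α] [DecidableEq α] {m : ℕ} {S G : Finset α} {e e' : α}

def supersetsOfCard (m : ℕ) (S : Finset α) : Finset (Finset α) :=
  univ.filter fun G => #G = m ∧ S ⊆ G

@[simp]
lemma mem_supersetsOfCard : G ∈ supersetsOfCard m S ↔ #G = m ∧ S ⊆ G := by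
  simp [supersetsOfCard]

lemma supersetsOfCard_empty (m : ℕ) :
    supersetsOfCard m (∅ : Finset α) = powersetCard m univ := by
  ext G; simp

lemma supersetsOfCard_nonempty (hS : #S ≤ m) (hm : m ≤ Fintype.card α) :
    (supersetsOfCard m S).Nonempty :=
  let ⟨G, hSG, hG⟩ := exists_superset_card_eq hS hm
  ⟨G, mem_supersetsOfCard.2 ⟨hG, hSG⟩⟩

lemma supersetsOfCard_of_card_eq (hS : #S = m) : supersetsOfCard m S = {S} := by
  ext G
  simp only [mem_supersetsOfCard, mem_singleton]
  refine ⟨fun ⟨hG, hSG⟩ => (eq_of_subset_of_card_le hSG (by omega)).symm, ?_⟩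
  rintro rfl
  exact ⟨hS, subset_rfl⟩

lemma supersetsOfCard_insert :
    supersetsOfCard m (insert e S) = (supersetsOfCard m S).filter (e ∈ ·) := by
  ext G
  simp only [mem_supersetsOfCard, mem_filter, insert_subset_iff]
  tauto

-- Each `G ⊇ S` with `#G = m` arises from the `m - #S` choices of `e ∈ G \ S`.
lemma sum_compl_sum_supersetsOfCard_insert {M : Type*} [AddCommMonoid M] (w : Finset α → M) :
    ∑ e ∈ Sᶜ, ∑ G ∈ supersetsOfCard m (insert e S), w G
      = (m - #S) • ∑ G ∈ supersetsOfCard m S, w G := by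
  simp_rw [supersetsOfCard_insert, sum_filter]
  rw [sum_comm, smul_sum]
  refine sum_congr rfl fun G hG => ?_
  obtain ⟨hG, hSG⟩ := mem_supersetsOfCard.1 hG
  rw [← sum_filter, sum_const, ← hG, ← card_sdiff_of_subset hSG]
  congr 2
  ext x
  simp [and_comm]

lemma mem_of_mem_supersetsOfCard_insert (hG : G ∈ supersetsOfCard m (insert e S)) : e ∈ G :=
  (mem_supersetsOfCard.1 hG).2 (mem_insert_self e S)

lemma exchange_mem_supersetsOfCard (he : e ∉ S) (hG : G ∈ supersetsOfCard m (insert e S)) :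
    exchange e e' G ∈ supersetsOfCard m (insert e' S) := by
  obtain ⟨hG, heG, hSG⟩ := by simpa only [mem_supersetsOfCard, insert_subset_iff] using hG
  unfold exchange
  split_ifs with h
  · exact mem_supersetsOfCard.2 ⟨hG, insert_subset h hSG⟩
  · refine mem_supersetsOfCard.2 ⟨?_, insert_subset_insert _ ?_⟩
    · rw [card_insert_of_notMem (fun h' => h (mem_of_mem_erase h')), card_erase_of_mem heG, hG]
      have := card_pos.2 ⟨e, heG⟩
      omega
    · exact fun x hx => mem_erase.2 ⟨fun h => he (h ▸ hx), hSG hx⟩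

lemma card_supersetsOfCard_insert_eq (he : e ∉ S) (he' : e' ∉ S) :
    #(supersetsOfCard m (insert e S)) = #(supersetsOfCard m (insert e' S)) := by
  obtain rfl | hee' := eq_or_ne e e'
  · rfl
  exact card_nbij' (exchange e e') (exchange e' e)
    (fun G hG => exchange_mem_supersetsOfCard he hG)
    (fun G hG => exchange_mem_supersetsOfCard he' hG)
    (fun G hG => exchange_exchange hee' (mem_of_mem_supersetsOfCard_insert hG))
    (fun G hG => exchange_exchange hee'.symm (mem_of_mem_supersetsOfCard_insert hG))

lemma card_compl_mul_card_supersetsOfCard_insert (he : e ∉ S) :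
    #Sᶜ * #(supersetsOfCard m (insert e S)) = (m - #S) * #(supersetsOfCard m S) := by
  have h := sum_compl_sum_supersetsOfCard_insert (m := m) (S := S) fun _ => 1
  simp only [sum_const, smul_eq_mul, mul_one] at h
  rw [← h, sum_const_nat fun e' he' => card_supersetsOfCard_insert_eq (mem_compl.1 he') he]

lemma expect_supersetsOfCard_eq_expect_compl_expect_insert (hS : #S < m)
    (hm : m ≤ Fintype.card α) (w : Finset α → ℝ) :
    𝔼 G ∈ supersetsOfCard m S, w G = 𝔼 e ∈ Sᶜ, 𝔼 G ∈ supersetsOfCard m (insert e S), w G := by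
  have hSc : (0 : ℝ) < #Sᶜ := by
    rw [card_compl]; exact_mod_cast Nat.sub_pos_of_lt (by omega)
  have hmS : (0 : ℝ) < (m - #S : ℕ) := by exact_mod_cast Nat.sub_pos_of_lt hS
  have hc₀ : (0 : ℝ) < #(supersetsOfCard m S) := by
    exact_mod_cast (supersetsOfCard_nonempty hS.le hm).card_pos
  have hc : ∀ e ∈ Sᶜ, (#(supersetsOfCard m (insert e S)) : ℝ)
      = (m - #S : ℕ) * #(supersetsOfCard m S) / #Sᶜ := by
    intro e he
    rw [eq_div_iff hSc.ne', mul_comm]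
    exact_mod_cast card_compl_mul_card_supersetsOfCard_insert (m := m) (mem_compl.1 he)
  symm
  calc 𝔼 e ∈ Sᶜ, 𝔼 G ∈ supersetsOfCard m (insert e S), w G
      = 𝔼 e ∈ Sᶜ, (∑ G ∈ supersetsOfCard m (insert e S), w G)
          / ((m - #S : ℕ) * #(supersetsOfCard m S) / #Sᶜ) :=
        expect_congr rfl fun e he => by rw [expect_eq_sum_div_card, hc e he]
    _ = 𝔼 G ∈ supersetsOfCard m S, w G := by
        rw [expect_eq_sum_div_card, ← sum_div, sum_compl_sum_supersetsOfCard_insert,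
          nsmul_eq_mul, expect_eq_sum_div_card]
        field_simp

end Supersets

section HarmonicSums

lemma sum_range_inv_sub_le_of_three_mul_le {N m : ℕ} (h : 3 * m ≤ 2 * N) :
    ∑ j ∈ range m, ((N : ℝ) - j)⁻¹ ≤ 3 * m / N := by
  rcases Nat.eq_zero_or_pos N with rfl | hN
  · simp [show m = 0 by omega]
  have hNR : (0 : ℝ) < N := by exact_mod_cast hN
  calc ∑ j ∈ range m, ((N : ℝ) - j)⁻¹ ≤ ∑ _j ∈ range m, 3 / (N : ℝ) := by
        refine sum_le_sum fun j hj => ?_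
        have hj : (3 * j + N : ℝ) ≤ 3 * N := by
          exact_mod_cast (show 3 * j + N ≤ 3 * N by have := mem_range.1 hj; omega)
        rw [inv_eq_one_div, div_le_div_iff₀ (by linarith) hNR]
        linarith
    _ = 3 * m / N := by
        rw [sum_const, card_range, nsmul_eq_mul]
        ring

lemma sum_range_sub_inv_sub_le_of_lt_three_mul {N m : ℕ} (hm : m ≤ N) (h : 2 * N < 3 * m) :
    ∑ j ∈ range (N - m), ((N : ℝ) - j)⁻¹ ≤ 3 * m / N := by
  have hNR : (0 : ℝ) < N := by exact_mod_cast (show 0 < N by omega)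
  have h' : (2 * N + 1 : ℝ) ≤ 3 * m := by exact_mod_cast h
  have hmN : (m : ℝ) ≤ N := by exact_mod_cast hm
  calc ∑ j ∈ range (N - m), ((N : ℝ) - j)⁻¹ ≤ ∑ _j ∈ range (N - m), ((m : ℝ) + 1)⁻¹ := by
        refine sum_le_sum fun j hj => ?_
        have hj : (m + 1 + j : ℝ) ≤ N := by
          exact_mod_cast (show m + 1 + j ≤ N by have := mem_range.1 hj; omega)
        exact inv_anti₀ (by positivity) (by linarith)
    _ = (N - m) / (m + 1) := by
        rw [sum_const, card_range, nsmul_eq_mul, Nat.cast_sub hm, div_eq_mul_inv]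
    _ ≤ 3 * m / N := by
        rw [div_le_div_iff₀ (by positivity) hNR]
        nlinarith

end HarmonicSums

lemma exists_bernstein_parameter {W B a : ℝ} (hW : 0 ≤ W) (hB : 0 ≤ B) (ha : 0 ≤ a) :
    ∃ L, 0 ≤ L ∧ L * (2 * B) ≤ 1 ∧ L ^ 2 * W - L * a ≤ -a ^ 2 / (4 * W + 6 * a * B) := by
  rcases (show 0 ≤ 4 * W + 6 * a * B by positivity).eq_or_lt with hD | hD
  · exact ⟨0, le_rfl, by simp, by simp [← hD]⟩
  refine ⟨2 * a / (4 * W + 6 * a * B), by positivity, ?_, ?_⟩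
  · rw [div_mul_eq_mul_div, div_le_one hD]
    nlinarith
  · have h : (2 * a / (4 * W + 6 * a * B)) ^ 2 * W - 2 * a / (4 * W + 6 * a * B) * a
        - -a ^ 2 / (4 * W + 6 * a * B) = -(6 * a ^ 3 * B) / (4 * W + 6 * a * B) ^ 2 := by
      field_simp
      ring
    have : -(6 * a ^ 3 * B) / (4 * W + 6 * a * B) ^ 2 ≤ 0 :=
      div_nonpos_of_nonpos_of_nonneg (by have := pow_nonneg ha 3; nlinarith) (sq_nonneg _)
    linarith

section SwapLipschitz

variable {α : Type*} [Fintype α] [DecidableEq α] {m : ℕ} {S G : Finset α} {e e' : α}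
  {ψ : α → ℝ} {f : Finset α → ℝ} {B L : ℝ}

def SwapLipschitzWith (m : ℕ) (ψ : α → ℝ) (f : Finset α → ℝ) : Prop :=
  ∀ G G' : Finset α, #G = m → #G' = m → ∀ e e' : α,
    G \ G' ∪ G' \ G = {e, e'} → |f G - f G'| ≤ ψ e + ψ e'

lemma SwapLipschitzWith.abs_sub_exchange_le (hψ : ∀ x, 0 ≤ ψ x) (hf : SwapLipschitzWith m ψ f)
    (he : e ∉ S) (hee' : e ≠ e') (hG : G ∈ supersetsOfCard m (insert e S)) :
    |f G - f (exchange e e' G)| ≤ ψ e + ψ e' := by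
  by_cases he'G : e' ∈ G
  · simpa [exchange, he'G] using add_nonneg (hψ e) (hψ e')
  · refine hf _ _ (mem_supersetsOfCard.1 hG).1
      (mem_supersetsOfCard.1 (exchange_mem_supersetsOfCard he hG)).1 e e'
      (exchange_symmDiff hee' (mem_of_mem_supersetsOfCard_insert hG) he'G)

lemma SwapLipschitzWith.abs_expect_insert_sub_expect_insert_le (hψ : ∀ x, 0 ≤ ψ x)
    (hf : SwapLipschitzWith m ψ f) (he : e ∉ S) (he' : e' ∉ S) :
    |𝔼 G ∈ supersetsOfCard m (insert e S), f G - 𝔼 G ∈ supersetsOfCard m (insert e' S), f G|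
      ≤ ψ e + ψ e' := by
  obtain rfl | hee' := eq_or_ne e e'
  · simpa using add_nonneg (hψ e) (hψ e)
  rw [← expect_nbij' (exchange e e') (exchange e' e)
    (fun G hG => exchange_mem_supersetsOfCard he hG)
    (fun G hG => exchange_mem_supersetsOfCard he' hG)
    (fun G hG => exchange_exchange hee' (mem_of_mem_supersetsOfCard_insert hG))
    (fun G hG => exchange_exchange hee'.symm (mem_of_mem_supersetsOfCard_insert hG))
    (fun G _ => rfl),
    ← expect_sub_distrib]
  refine (abs_expect_le _ _).trans ?_
  obtain h | hne := (supersetsOfCard m (insert e S)).eq_empty_or_nonempty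
  · simpa [h] using add_nonneg (hψ e) (hψ e')
  · exact expect_le hne fun G hG => hf.abs_sub_exchange_le hψ he hee' hG

lemma SwapLipschitzWith.expect_exp_sub_expect_le_of_insert (hψ : ∀ x, 0 ≤ ψ x)
    (hB : ∀ x, ψ x ≤ B) (hf : SwapLipschitzWith m ψ f) (hm : m ≤ Fintype.card α)
    (hS : #S < m) (hL₀ : 0 ≤ L) (hL₁ : L * (2 * B) ≤ 1) {V : ℝ}
    (ih : ∀ e ∉ S, 𝔼 G ∈ supersetsOfCard m (insert e S),
      exp (L * (f G - 𝔼 H ∈ supersetsOfCard m (insert e S), f H)) ≤ exp V) :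
    𝔼 G ∈ supersetsOfCard m S, exp (L * (f G - 𝔼 H ∈ supersetsOfCard m S, f H))
      ≤ exp (V + 2 * L ^ 2 * (∑ x, ψ x ^ 2) / (Fintype.card α - #S)) := by
  set y : α → ℝ := fun e => 𝔼 H ∈ supersetsOfCard m (insert e S), f H
  have hSc : Sᶜ.Nonempty := by
    rw [← card_pos, card_compl]; omega
  have hcard : (#Sᶜ : ℝ) = Fintype.card α - #S := by
    rw [card_compl, Nat.cast_sub (card_le_univ S)]
  calc 𝔼 G ∈ supersetsOfCard m S, exp (L * (f G - 𝔼 H ∈ supersetsOfCard m S, f H))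
      = 𝔼 e ∈ Sᶜ, (𝔼 G ∈ supersetsOfCard m (insert e S), exp (L * (f G - y e)))
          * exp (L * (y e - 𝔼 e' ∈ Sᶜ, y e')) := by
        rw [expect_supersetsOfCard_eq_expect_compl_expect_insert hS hm f,
          expect_supersetsOfCard_eq_expect_compl_expect_insert hS hm]
        refine expect_congr rfl fun e _ => ?_
        rw [expect_mul]
        refine expect_congr rfl fun G _ => ?_
        rw [← exp_add]
        simp only [y]
        ring_nf
    _ ≤ 𝔼 e ∈ Sᶜ, exp V * exp (L * (y e - 𝔼 e' ∈ Sᶜ, y e')) :=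
        expect_le_expect fun e he =>
          mul_le_mul_of_nonneg_right (ih e (mem_compl.1 he)) (exp_pos _).le
    _ ≤ exp V * exp (2 * L ^ 2 * (∑ x ∈ Sᶜ, ψ x ^ 2) / #Sᶜ) := by
        rw [← mul_expect]
        gcongr
        exact expect_exp_mul_sub_expect_le hSc
          (fun e he e' he' => hf.abs_expect_insert_sub_expect_insert_le hψ
            (mem_compl.1 he) (mem_compl.1 he'))
          (fun x _ => hB x) hL₀ hL₁
    _ ≤ exp (V + 2 * L ^ 2 * (∑ x, ψ x ^ 2) / (Fintype.card α - #S)) := by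
        rw [exp_add, ← hcard]
        gcongr
        exact subset_univ _

theorem SwapLipschitzWith.expect_exp_sub_expect_supersetsOfCard_le (hψ : ∀ x, 0 ≤ ψ x)
    (hB : ∀ x, ψ x ≤ B) (hf : SwapLipschitzWith m ψ f) (hm : m ≤ Fintype.card α)
    (hL₀ : 0 ≤ L) (hL₁ : L * (2 * B) ≤ 1) (hS : #S ≤ m) :
    𝔼 G ∈ supersetsOfCard m S, exp (L * (f G - 𝔼 H ∈ supersetsOfCard m S, f H))
      ≤ exp (2 * L ^ 2 * (∑ x, ψ x ^ 2) * ∑ j ∈ Ico #S m, ((Fintype.card α : ℝ) - j)⁻¹) := by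
  induction hd : m - #S generalizing S with
  | zero =>
    have hSm : #S = m := by omega
    simp [supersetsOfCard_of_card_eq hSm, hSm]
  | succ d ih =>
    have hS' : #S < m := by omega
    refine (hf.expect_exp_sub_expect_le_of_insert hψ hB hm hS' hL₀ hL₁
      (V := 2 * L ^ 2 * (∑ x, ψ x ^ 2) * ∑ j ∈ Ico (#S + 1) m, ((Fintype.card α : ℝ) - j)⁻¹)
      fun e he => ?_).trans_eq ?_
    · have h := ih (S := insert e S) (by rw [card_insert_of_notMem he]; omega)
        (by rw [card_insert_of_notMem he]; omega)
      rwa [card_insert_of_notMem he] at h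
    · rw [sum_eq_sum_Ico_succ_bot hS']
      ring_nf

lemma SwapLipschitzWith.compl (hf : SwapLipschitzWith m ψ f) (hm : m ≤ Fintype.card α) :
    SwapLipschitzWith (Fintype.card α - m) ψ fun G => f Gᶜ := by
  intro G G' hG hG' e e' h
  refine hf _ _ (by rw [card_compl, hG]; omega) (by rw [card_compl, hG']; omega) e e' ?_
  rw [compl_sdiff_compl, compl_sdiff_compl, union_comm, h]

lemma expect_powersetCard_compl (hm : m ≤ Fintype.card α) (w : Finset α → ℝ) :
    𝔼 G ∈ powersetCard (Fintype.card α - m) univ, w Gᶜ = 𝔼 G ∈ powersetCard m univ, w G :=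
  expect_nbij' compl compl
    (fun G hG => by simp_all [card_compl]; omega)
    (fun G hG => by simp_all [card_compl])
    (fun G _ => compl_compl G) (fun G _ => compl_compl G) fun G _ => rfl

theorem SwapLipschitzWith.expect_exp_sub_expect_powersetCard_le (hψ : ∀ x, 0 ≤ ψ x)
    (hB : ∀ x, ψ x ≤ B) (hf : SwapLipschitzWith m ψ f) (hm : m ≤ Fintype.card α)
    (hL₀ : 0 ≤ L) (hL₁ : L * (2 * B) ≤ 1) :
    𝔼 G ∈ powersetCard m univ, exp (L * (f G - 𝔼 H ∈ powersetCard m univ, f H))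
      ≤ exp (L ^ 2 * (6 * (m / Fintype.card α) * ∑ x, ψ x ^ 2)) := by
  have key : ∀ {k : ℕ} {g : Finset α → ℝ}, SwapLipschitzWith k ψ g → k ≤ Fintype.card α →
      𝔼 G ∈ powersetCard k univ, exp (L * (g G - 𝔼 H ∈ powersetCard k univ, g H))
        ≤ exp (2 * L ^ 2 * (∑ x, ψ x ^ 2) * ∑ j ∈ range k, ((Fintype.card α : ℝ) - j)⁻¹) :=
    fun hg hk => by
      have h := hg.expect_exp_sub_expect_supersetsOfCard_le hψ hB hk hL₀ hL₁
        (S := ∅) (Nat.zero_le _)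
      rwa [supersetsOfCard_empty, card_empty, ← range_eq_Ico] at h
  have hΨ : 0 ≤ 2 * L ^ 2 * ∑ x, ψ x ^ 2 := by positivity
  by_cases h : 3 * m ≤ 2 * Fintype.card α
  · refine (key hf hm).trans (exp_le_exp.2 ?_)
    calc _ ≤ 2 * L ^ 2 * (∑ x, ψ x ^ 2) * (3 * m / Fintype.card α) :=
          mul_le_mul_of_nonneg_left (sum_range_inv_sub_le_of_three_mul_le h) hΨ
      _ = _ := by ring
  · -- The harmonic sum is too large here; complements have fewer than `N / 3` edges.
    have hc := key (hf.compl hm) (Nat.sub_le _ _)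
    rw [expect_powersetCard_compl hm f,
      expect_powersetCard_compl hm fun G => exp (L * (f G - 𝔼 H ∈ powersetCard m univ, f H))]
      at hc
    refine hc.trans (exp_le_exp.2 ?_)
    calc _ ≤ 2 * L ^ 2 * (∑ x, ψ x ^ 2) * (3 * m / Fintype.card α) :=
          mul_le_mul_of_nonneg_left (sum_range_sub_inv_sub_le_of_lt_three_mul hm (by omega)) hΨ
      _ = _ := by ring

theorem SwapLipschitzWith.card_filter_div_card_le (hψ : ∀ x, 0 ≤ ψ x) (hB : ∀ x, ψ x ≤ B)
    (hB₀ : 0 ≤ B) (hf : SwapLipschitzWith m ψ f) (hm : m ≤ Fintype.card α) {a : ℝ}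
    (ha : 0 ≤ a) :
    (#((powersetCard m univ).filter fun G => a ≤ f G - 𝔼 H ∈ powersetCard m univ, f H) : ℝ)
        / #(powersetCard m (univ : Finset α))
      ≤ exp (-a ^ 2 / (24 * (m / Fintype.card α) * (∑ x, ψ x ^ 2) + 6 * a * B)) := by
  set W := 6 * (m / Fintype.card α) * ∑ x, ψ x ^ 2
  obtain ⟨L, hL₀, hL₁, hL⟩ := exists_bernstein_parameter (W := W) (by positivity) hB₀ ha
  calc _ ≤ exp (-(L * a)) * 𝔼 G ∈ powersetCard m univ,
          exp (L * (f G - 𝔼 H ∈ powersetCard m univ, f H)) :=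
        card_filter_div_card_le_exp_mul_expect _ _ hL₀
    _ ≤ exp (-(L * a)) * exp (L ^ 2 * W) := by
        gcongr
        exact hf.expect_exp_sub_expect_powersetCard_le hψ hB hm hL₀ hL₁
    _ ≤ _ := by
        rw [← exp_add, exp_le_exp]
        convert hL using 3 <;> ring

end SwapLipschitz

open scoped BigOperators Classical

theorem stmt_9_general (n m : ℕ) (hm : m ≤ n * (n - 1) / 2)
    (ψ : {e : Sym2 (Fin n) // ¬ e.IsDiag} → ℝ) (hψ : ∀ e, 0 < ψ e)
    (f : Finset {e : Sym2 (Fin n) // ¬ e.IsDiag} → ℝ)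
    (hf : ∀ G G' : Finset {e : Sym2 (Fin n) // ¬ e.IsDiag}, G.card = m → G'.card = m →
      ∀ e e' : {e : Sym2 (Fin n) // ¬ e.IsDiag},
        (G \ G') ∪ (G' \ G) = ({e, e'} : Finset _) → |f G - f G'| ≤ ψ e + ψ e')
    (a : ℝ) (ha : 0 ≤ a) :
    -- Ω : the set of graphs on [n] with exactly m edges (as edge sets)
    ∀ Ω : Finset (Finset {e : Sym2 (Fin n) // ¬ e.IsDiag}),
      Ω = Finset.univ.filter (fun G => G.card = m) →
    ∀ t : ℝ, t = (m : ℝ) / ((n * (n - 1) / 2 : ℕ) : ℝ) →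
    ∀ Ef : ℝ, Ef = (∑ G ∈ Ω, f G) / (Ω.card : ℝ) →
    ((Ω.filter (fun G => a ≤ f G - Ef)).card : ℝ) / (Ω.card : ℝ)
      ≤ Real.exp (-a ^ 2 / (24 * t * (∑ e, ψ e ^ 2) + 6 * a * (⨆ e, ψ e))) := by
  intro Ω hΩ t ht Ef hEf
  have hcard : Fintype.card {e : Sym2 (Fin n) // ¬ e.IsDiag} = n * (n - 1) / 2 := by
    rw [Sym2.card_subtype_not_diag, Fintype.card_fin, Nat.choose_two_right]
  have hΩ' : Ω = powersetCard m univ := by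
    ext G
    simp [hΩ]
  rw [hΩ'] at hEf ⊢
  rw [hEf, ← expect_eq_sum_div_card, ht, ← hcard]
  exact SwapLipschitzWith.card_filter_div_card_le (fun e => (hψ e).le)
    (le_ciSup (Set.finite_range ψ).bddAbove) (Real.iSup_nonneg fun e => (hψ e).le) hf
    (hcard ▸ hm) ha

theorem stmt_9 (n m : ℕ) (hn : 2 ≤ n) (hm : m ≤ n * (n - 1) / 2)
    (ψ : {e : Sym2 (Fin n) // ¬ e.IsDiag} → ℝ) (hψ : ∀ e, 0 < ψ e)
    (f : Finset {e : Sym2 (Fin n) // ¬ e.IsDiag} → ℝ)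
    (hf : ∀ G G' : Finset {e : Sym2 (Fin n) // ¬ e.IsDiag}, G.card = m → G'.card = m →
      ∀ e e' : {e : Sym2 (Fin n) // ¬ e.IsDiag},
        (G \ G') ∪ (G' \ G) = ({e, e'} : Finset _) → |f G - f G'| ≤ ψ e + ψ e')
    (a : ℝ) (ha : 0 ≤ a) :
    -- Ω : the set of graphs on [n] with exactly m edges (as edge sets)
    ∀ Ω : Finset (Finset {e : Sym2 (Fin n) // ¬ e.IsDiag}),
      Ω = Finset.univ.filter (fun G => G.card = m) →
    ∀ t : ℝ, t = (m : ℝ) / ((n * (n - 1) / 2 : ℕ) : ℝ) →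
    ∀ Ef : ℝ, Ef = (∑ G ∈ Ω, f G) / (Ω.card : ℝ) →
    ((Ω.filter (fun G => a ≤ f G - Ef)).card : ℝ) / (Ω.card : ℝ)
      ≤ Real.exp (-a ^ 2 / (24 * t * (∑ e, ψ e ^ 2) + 6 * a * (⨆ e, ψ e))) :=
  stmt_9_general n m hm ψ hψ f hf a ha
end

section
/- Suppose t ≥ 2·log(n)/n and b ≥ 4tn, with m = tN and N = n(n−1)/2. Let G_m ~ G(n,m) and set ℓ_b = log(b/(e·t·n)). Then, except with probability at most exp(−b)/2, the maximum degree of G_m satisfies Δ(G_m) ≤ 2b/ℓ_b. -/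
/-!
Let `a = ⌈2b/ℓ_b⌉`. A uniform `m`-subset of the `N = C(n,2)` possible edges contains a fixed
`a`-set of edges with probability `C(N-a, m-a) / C(N, m) ≤ (m/N)^a = t^a`, so a union bound over
the vertices `v` and the `a`-sets of edges at `v` gives `P(Δ ≥ a) ≤ n C(n,a) t^a ≤ n (etn/a)^a`.
The function `x ↦ x log (x/(etn))` increases for `x ≥ etn`, and at `x = 2b/ℓ_b` it equals
`2b - (2b/ℓ_b) log (ℓ_b/2) ≥ (2 - 1/e) b ≥ 3b/2` because `log y ≤ y/e`. Hence the probability is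
at most `n exp(-3b/2) ≤ exp(-b)/2`, as `b ≥ 4tn ≥ 8 log n ≥ 2 log (2n)`.
-/

open scoped BigOperators Classical

open Finset Real

namespace Nat

theorem descFactorial_mul_pow_le_descFactorial_mul_pow {m N : ℕ} (h : m ≤ N) (a : ℕ) :
    m.descFactorial a * N ^ a ≤ N.descFactorial a * m ^ a := by
  induction a with
  | zero => simp
  | succ a ih =>
    have step : (m - a) * N ≤ (N - a) * m := by
      rw [Nat.sub_mul, Nat.sub_mul, mul_comm N m]
      exact Nat.sub_le_sub_left (Nat.mul_le_mul_left a h) _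
    calc m.descFactorial (a + 1) * N ^ (a + 1)
        = ((m - a) * N) * (m.descFactorial a * N ^ a) := by
          rw [Nat.descFactorial_succ, pow_succ]; ring
      _ ≤ ((N - a) * m) * (N.descFactorial a * m ^ a) := Nat.mul_le_mul step ih
      _ = N.descFactorial (a + 1) * m ^ (a + 1) := by
          rw [Nat.descFactorial_succ, pow_succ]; ring

theorem choose_mul_pow_le_choose_mul_pow {m N : ℕ} (h : m ≤ N) (a : ℕ) :
    m.choose a * N ^ a ≤ N.choose a * m ^ a := by
  have := descFactorial_mul_pow_le_descFactorial_mul_pow h a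
  rw [descFactorial_eq_factorial_mul_choose, descFactorial_eq_factorial_mul_choose,
    mul_assoc, mul_assoc] at this
  exact Nat.le_of_mul_le_mul_left this a.factorial_pos

theorem choose_sub_mul_pow_le_choose_mul_pow {m N a : ℕ} (hmN : m ≤ N) (ham : a ≤ m) :
    (N - a).choose (m - a) * N ^ a ≤ N.choose m * m ^ a := by
  refine Nat.le_of_mul_le_mul_left ?_ (Nat.choose_pos (ham.trans hmN))
  calc N.choose a * ((N - a).choose (m - a) * N ^ a)
      = N.choose m * (m.choose a * N ^ a) := by
        rw [← mul_assoc, ← Nat.choose_mul ham, mul_assoc]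
    _ ≤ N.choose m * (N.choose a * m ^ a) :=
        Nat.mul_le_mul_left _ (choose_mul_pow_le_choose_mul_pow hmN a)
    _ = N.choose a * (N.choose m * m ^ a) := by ring

end Nat

namespace Finset

variable {α : Type*}

theorem card_filter_powersetCard_le (E : Finset α) (P : α → Prop) [DecidablePred P]
    (a m : ℕ) :
    #{S ∈ E.powersetCard m | a ≤ #{x ∈ S | P x}}
      ≤ (#{x ∈ E | P x}).choose a * (#E - a).choose (m - a) := by
  have hcover : {S ∈ E.powersetCard m | a ≤ #{x ∈ S | P x}} ⊆
      ({x ∈ E | P x}.powersetCard a).biUnion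
        fun A ↦ ((E \ A).powersetCard (m - a)).image (A ∪ ·) := by
    intro S hS
    obtain ⟨hSm, haS⟩ := mem_filter.mp hS
    obtain ⟨hSE, rfl⟩ := mem_powersetCard.mp hSm
    obtain ⟨A, hAS, rfl⟩ := exists_subset_card_eq haS
    have hAS' : A ⊆ S := hAS.trans (filter_subset _ _)
    simp only [mem_biUnion, mem_powersetCard, mem_image]
    exact ⟨A, ⟨hAS.trans (filter_subset_filter _ hSE), rfl⟩, S \ A,
      ⟨sdiff_subset_sdiff hSE le_rfl, card_sdiff_of_subset hAS'⟩, union_sdiff_of_subset hAS'⟩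
  calc _ ≤ _ := card_le_card hcover
    _ ≤ ∑ A ∈ {x ∈ E | P x}.powersetCard a, #((E \ A).powersetCard (m - a)) :=
        card_biUnion_le.trans (sum_le_sum fun _ _ ↦ card_image_le)
    _ = ∑ _A ∈ {x ∈ E | P x}.powersetCard a, (#E - a).choose (m - a) := by
        refine sum_congr rfl fun A hA ↦ ?_
        rw [mem_powersetCard] at hA
        rw [card_powersetCard, card_sdiff_of_subset (hA.1.trans (filter_subset _ _)), hA.2]
    _ = _ := by rw [sum_const, card_powersetCard, smul_eq_mul]

theorem card_filter_powersetCard_mul_pow_le (E : Finset α) (P : α → Prop) [DecidablePred P]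
    (a m : ℕ) :
    #{S ∈ E.powersetCard m | a ≤ #{x ∈ S | P x}} * #E ^ a
      ≤ (#{x ∈ E | P x}).choose a * (#E).choose m * m ^ a := by
  by_cases ham : a ≤ m
  · by_cases hmE : m ≤ #E
    · calc _ ≤ (#{x ∈ E | P x}).choose a * (#E - a).choose (m - a) * #E ^ a :=
            Nat.mul_le_mul_right _ (card_filter_powersetCard_le E P a m)
        _ ≤ _ := by
            rw [mul_assoc, mul_assoc]
            exact Nat.mul_le_mul_left _ (Nat.choose_sub_mul_pow_le_choose_mul_pow hmE ham)
    · simp [powersetCard_eq_empty.mpr (not_le.mp hmE)]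
  · suffices {S ∈ E.powersetCard m | a ≤ #{x ∈ S | P x}} = ∅ by simp [this]
    refine filter_false_of_mem fun S hS ↦ ?_
    have := (card_filter_le S fun x ↦ P x).trans (mem_powersetCard.mp hS).2.le
    omega

theorem card_div_choose_le_of_exists_le_card_filter {V : Type*} [Fintype V] {E : Finset α}
    {P : V → α → Prop} [∀ v, DecidablePred (P v)] {K : ℕ} (hK : ∀ v, #{x ∈ E | P v x} ≤ K)
    (hE : 0 < #E) {B : Finset (Finset α)} {a m : ℕ} (hBE : B ⊆ E.powersetCard m)
    (hB : ∀ S ∈ B, ∃ v, a ≤ #{x ∈ S | P v x}) :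
    (#B : ℝ) / (#E).choose m ≤ Fintype.card V * K.choose a * ((m : ℝ) / #E) ^ a := by
  have hunion : #B * #E ^ a ≤ Fintype.card V * K.choose a * (#E).choose m * m ^ a := by
    calc _ ≤ (∑ v, #{S ∈ E.powersetCard m | a ≤ #{x ∈ S | P v x}}) * #E ^ a := by
          refine Nat.mul_le_mul_right _ (le_trans (card_le_card fun S hS ↦ ?_) card_biUnion_le)
          obtain ⟨v, hv⟩ := hB S hS
          exact mem_biUnion.mpr ⟨v, mem_univ v, mem_filter.mpr ⟨hBE hS, hv⟩⟩
      _ ≤ ∑ _v : V, K.choose a * (#E).choose m * m ^ a := by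
          rw [sum_mul]
          refine sum_le_sum fun v _ ↦ (card_filter_powersetCard_mul_pow_le E (P v) a m).trans ?_
          gcongr
          exact hK v
      _ = _ := by rw [sum_const, card_univ, smul_eq_mul, mul_assoc, mul_assoc, mul_assoc]
  rcases Nat.eq_zero_or_pos ((#E).choose m) with hzero | hpos
  · rw [hzero, Nat.cast_zero, div_zero]
    positivity
  have hEa : (0 : ℝ) < (#E : ℝ) ^ a := by positivity
  rw [div_le_iff₀ (by exact_mod_cast hpos), div_pow, mul_div_assoc', div_mul_eq_mul_div,
    le_div_iff₀ hEa]
  exact_mod_cast hunion.trans_eq (by ring)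

end Finset

theorem SimpleGraph.degree_fromEdgeSet {V : Type*} [Fintype V] [DecidableEq V]
    {S : Finset (Sym2 V)} (hS : ∀ e ∈ S, ¬ e.IsDiag) (v : V) :
    (fromEdgeSet (S : Set (Sym2 V))).degree v = #{e ∈ S | v ∈ e} := by
  rw [← card_incidenceFinset_eq_degree, incidenceFinset_eq_filter]
  congr 1
  ext e
  simp +contextual [edgeFinset, edgeSet_fromEdgeSet, hS]

theorem Sym2.card_filter_not_isDiag {α : Type*} [Fintype α] [DecidableEq α] :
    #({e | ¬ e.IsDiag} : Finset (Sym2 α)) = (Fintype.card α).choose 2 := by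
  rw [← Sym2.card_subtype_not_diag, Fintype.card_subtype]

theorem SimpleGraph.card_filter_not_isDiag_mem_lt {V : Type*} [Fintype V] [DecidableEq V]
    (v : V) : #{e ∈ ({e | ¬ e.IsDiag} : Finset (Sym2 V)) | v ∈ e} < Fintype.card V := by
  rw [← degree_fromEdgeSet (fun e he ↦ (mem_filter.mp he).2) v]
  exact (fromEdgeSet _).degree_lt_card_verts v

namespace Real

theorem log_le_div_exp_one {y : ℝ} (hy : 0 < y) : log y ≤ y / exp 1 := by
  have := log_le_sub_one_of_pos (div_pos hy (exp_pos 1))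
  rw [log_div hy.ne' (exp_pos 1).ne', log_exp] at this
  linarith

theorem mul_log_div_le_mul_log_div {c x y : ℝ} (hc : 0 < c) (hcx : c ≤ x) (hxy : x ≤ y) :
    x * log (x / c) ≤ y * log (y / c) :=
  mul_le_mul hxy (log_le_log (div_pos (hc.trans_le hcx) hc) (by gcongr))
    (log_nonneg ((one_le_div hc).mpr hcx)) (hc.le.trans (hcx.trans hxy))

theorem three_mul_div_two_le_mul_log_div {b c A : ℝ} (hc : 0 < c) (hcb : c < b)
    (hA : 2 * b / log (b / c) ≤ A) : 3 * b / 2 ≤ A * log (A / c) := by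
  have hb0 : 0 < b := hc.trans hcb
  set L := log (b / c) with hL
  have hL0 : 0 < L := log_pos ((one_lt_div hc).mpr hcb)
  have hb : b = c * exp L := by rw [hL, exp_log (by positivity)]; field_simp
  have hcx : c ≤ 2 * b / L := by
    rw [le_div_iff₀ hL0, hb]
    nlinarith [add_one_le_exp L]
  have hlog : log (2 * b / L / c) = L - log (L / 2) := by
    rw [show 2 * b / L / c = exp L / (L / 2) by rw [hb]; field_simp,
      log_div (exp_pos _).ne' (by positivity), log_exp]
  have he : b / exp 1 ≤ b / 2 :=
    div_le_div_of_nonneg_left hb0.le two_pos (by linarith [exp_one_gt_d9])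
  calc 3 * b / 2 ≤ 2 * b - b / exp 1 := by linarith
    _ = 2 * b - 2 * b / L * (L / 2 / exp 1) := by field_simp
    _ ≤ 2 * b - 2 * b / L * log (L / 2) := by
        have := log_le_div_exp_one (half_pos hL0)
        gcongr
    _ = 2 * b / L * log (2 * b / L / c) := by rw [hlog]; field_simp
    _ ≤ A * log (A / c) := mul_log_div_le_mul_log_div hc hcx hA

theorem div_pow_le_exp_neg {c B : ℝ} (hc : 0 < c) {a : ℕ} (ha : 0 < a)
    (h : B ≤ a * log (a / c)) : (c / a) ^ a ≤ exp (-B) := by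
  rw [← exp_log (by positivity : 0 < (c / a) ^ a), log_pow, ← inv_div, log_inv]
  exact exp_le_exp.mpr (by linarith)

end Real

theorem Nat.choose_mul_pow_le_exp_one_mul_div_pow (n a : ℕ) {t : ℝ} (ht : 0 ≤ t) :
    (n.choose a : ℝ) * t ^ a ≤ (exp 1 * t * n / a) ^ a := by
  have haa : (0 : ℝ) < (a : ℝ) ^ a := by
    rcases a with _ | a
    · simp
    · positivity
  have hfac : (a : ℝ) ^ a ≤ exp a * a.factorial := by
    rw [← div_le_iff₀ (by positivity)]
    exact pow_div_factorial_le_exp _ (by positivity) a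
  calc (n.choose a : ℝ) * t ^ a ≤ (n : ℝ) ^ a / a.factorial * t ^ a := by
        gcongr
        exact choose_le_pow_div a n
    _ = (t * n) ^ a / a.factorial := by ring
    _ ≤ (t * n) ^ a * (exp a / a ^ a) := by
        rw [mul_div_assoc', div_le_div_iff₀ (by positivity) haa, mul_assoc]
        exact mul_le_mul_of_nonneg_left hfac (by positivity)
    _ = (exp 1 * t * n / a) ^ a := by
        rw [div_pow, mul_pow, mul_pow, mul_pow, ← exp_nat_mul, mul_one]
        ring

theorem natCast_mul_choose_mul_pow_le_exp_neg {n a : ℕ} {t b : ℝ} (hn : 2 ≤ n)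
    (ht : 2 * log n / n ≤ t) (hb : 4 * t * n ≤ b) (ha : 2 * b / log (b / (exp 1 * t * n)) ≤ a) :
    n * n.choose a * t ^ a ≤ exp (-b) / 2 := by
  have hn2 : (2 : ℝ) ≤ n := by exact_mod_cast hn
  have hlogn : 0 < log n := log_pos (by linarith)
  have htn : 2 * log n ≤ t * n := by rwa [div_le_iff₀ (by positivity)] at ht
  have ht0 : 0 < t := lt_of_lt_of_le (by positivity) ht
  have hc : 0 < exp 1 * t * n := by positivity
  have hcb : exp 1 * t * n < b := by
    nlinarith [exp_one_lt_d9, mul_pos ht0 (by positivity : (0 : ℝ) < n)]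
  have ha0 : 0 < a := by
    have : 0 < 2 * b / log (b / (exp 1 * t * n)) :=
      div_pos (by linarith) (log_pos ((one_lt_div hc).mpr hcb))
    exact_mod_cast this.trans_le ha
  have h2n : 2 * (n : ℝ) ≤ exp (b / 2) := by
    rw [← exp_log (by positivity : (0 : ℝ) < 2 * n)]
    refine exp_le_exp.mpr ?_
    rw [log_mul two_ne_zero (by positivity)]
    linarith [log_le_log two_pos hn2]
  calc (n : ℝ) * n.choose a * t ^ a = n * (n.choose a * t ^ a) := by ring
    _ ≤ n * (exp 1 * t * n / a) ^ a := by
        gcongr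
        exact Nat.choose_mul_pow_le_exp_one_mul_div_pow n a ht0.le
    _ ≤ n * exp (-(3 * b / 2)) := by
        gcongr
        exact div_pow_le_exp_neg hc ha0 (three_mul_div_two_le_mul_log_div hc hcb ha)
    _ = 2 * n * exp (-(b / 2)) * exp (-b) / 2 := by
        rw [show -(3 * b / 2) = -(b / 2) + -b by ring, exp_add]
        ring
    _ ≤ exp (b / 2) * exp (-(b / 2)) * exp (-b) / 2 := by gcongr
    _ = exp (-b) / 2 := by rw [← exp_add, add_neg_cancel, exp_zero, one_mul]

theorem stmt_13 (n m : ℕ) (t b : ℝ) (hn : 2 ≤ n)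
    (ht : 2 * Real.log n / n ≤ t)
    (hm : (m : ℝ) = t * ((n * (n - 1) / 2 : ℕ) : ℝ))
    (hb : 4 * t * n ≤ b) :
    ∀ ℓb : ℝ, ℓb = Real.log (b / (Real.exp 1 * t * n)) →
    -- Ω : the set of graphs on [n] with exactly m edges (as sets of non-diagonal edges)
    ∀ Ω : Finset (Finset (Sym2 (Fin n))),
      Ω = Finset.univ.filter (fun S => S.card = m ∧ ∀ x ∈ S, ¬ x.IsDiag) →
    ((Ω.filter (fun S => ¬ ∀ v : Fin n,
        ((SimpleGraph.fromEdgeSet (↑S : Set (Sym2 (Fin n)))).degree v : ℝ)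
          ≤ 2 * b / ℓb)).card : ℝ) / (Ω.card : ℝ)
      ≤ Real.exp (-b) / 2 := by
  intro ℓb hℓb Ω hΩ
  set E : Finset (Sym2 (Fin n)) := {e | ¬ e.IsDiag} with hEdef
  have hΩE : Ω = E.powersetCard m := by
    ext S
    simp [hΩ, hEdef, mem_powersetCard, subset_iff, and_comm]
  have hE : #E = n.choose 2 := by rw [hEdef, Sym2.card_filter_not_isDiag, Fintype.card_fin]
  have hE0 : 0 < #E := hE ▸ Nat.choose_pos hn
  have htm : t = m / #E := by
    rw [hm, ← Nat.choose_two_right, ← hE, mul_div_cancel_right₀ _ (by exact_mod_cast hE0.ne')]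
  -- The `↑S : Set _` in the statement makes the filter range over the image of `Ω` in `Set`s.
  rw [bind_pure_comp, fmap_def, filter_image,
    show #Ω = (#E).choose m by rw [hΩE, card_powersetCard]]
  refine (div_le_div_of_nonneg_right (Nat.cast_le.mpr card_image_le) (Nat.cast_nonneg _)).trans ?_
  refine (card_div_choose_le_of_exists_le_card_filter (a := ⌈2 * b / ℓb⌉₊)
    (fun v ↦ (SimpleGraph.card_filter_not_isDiag_mem_lt v).le.trans_eq (Fintype.card_fin n)) hE0
    (hΩE ▸ filter_subset _ _) fun S hS ↦ ?_).trans ?_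
  · obtain ⟨hSΩ, hS⟩ := mem_filter.mp hS
    have hdiag : ∀ e ∈ S, ¬ e.IsDiag := (mem_filter.mp (hΩ ▸ hSΩ)).2.2
    push Not at hS
    obtain ⟨v, hv⟩ := hS
    refine ⟨v, (Nat.ceil_le.mpr hv.le).trans_eq ?_⟩
    -- the two degrees differ only in the `Decidable` instance for membership in `↑S`
    convert SimpleGraph.degree_fromEdgeSet hdiag v
  · rw [Fintype.card_fin, ← htm]
    exact natCast_mul_choose_mul_pow_le_exp_neg hn ht hb (hℓb ▸ Nat.le_ceil _)
end

section
/- Let M_∧(b,t) = max{b^{1/2} t n^{3/2}, (b²/ℓ²)·1{b < nℓ}, (bn/ℓ)·1{b ≥ nℓ}} and let κ(b,t) be defined by κ(b,t) = tn² for 1 ≤ b < t^{1/2}nℓ, κ(b,t) = b²/ℓ² for t^{1/2}nℓ ≤ b < nℓ, and κ(b,t) = bn/ℓ for nℓ ≤ b ≤ tn²ℓ, where ℓ = log(1/t). Then for all 1 ≤ b ≤ tn²ℓ we have M_∧(b,t)² ≥ b·t·n·κ(b,t). -/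
/-!
Since `√t · log (1/t) ≤ 2/e < 1` (and likewise `t · log (1/t) ≤ 1/e`), in the regime
`b ≥ √t n ℓ` both `b²/ℓ²` and `bn/ℓ` dominate `btn`, so there `M_∧ ≥ κ ≥ btn` and
`M_∧² ≥ btn · κ`. In the regime `b < √t n ℓ` the first term of `M_∧` already has square
`b t² n³ = btn · tn²`.
-/

open Real

lemma Real.log_le_div_exp_one_s17 {x : ℝ} (hx : 0 < x) : log x ≤ x / exp 1 := by
  have h := add_one_le_exp (log x - 1)
  rw [exp_sub, exp_log hx] at h
  linarith

lemma Real.mul_log_inv_le_div_exp_one {t : ℝ} (ht : 0 < t) : t * log (1 / t) ≤ 1 / exp 1 :=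
  calc t * log (1 / t) ≤ t * (1 / t / exp 1) :=
        mul_le_mul_of_nonneg_left (log_le_div_exp_one_s17 (by positivity)) ht.le
    _ = 1 / exp 1 := by field_simp

lemma Real.one_div_exp_one_lt_half : 1 / exp 1 < 1 / 2 := by
  have := add_one_lt_exp one_ne_zero
  rw [div_lt_div_iff₀ (exp_pos 1) two_pos]
  linarith

lemma Real.mul_log_inv_le_one {t : ℝ} (ht : 0 < t) : t * log (1 / t) ≤ 1 := by
  linarith [mul_log_inv_le_div_exp_one ht, one_div_exp_one_lt_half]

lemma Real.sqrt_mul_log_inv_le_one {t : ℝ} (ht : 0 < t) : √t * log (1 / t) ≤ 1 := by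
  have hs : 0 < √t := sqrt_pos.2 ht
  have hlog : log (1 / t) = 2 * log (1 / √t) := by
    conv_lhs => rw [← sq_sqrt ht.le]
    rw [one_div, log_inv, log_pow, one_div, log_inv]
    push_cast
    ring
  calc √t * log (1 / t) = 2 * (√t * log (1 / √t)) := by rw [hlog]; ring
    _ ≤ 2 * (1 / exp 1) := by gcongr; exact mul_log_inv_le_div_exp_one hs
    _ ≤ 1 := by linarith [one_div_exp_one_lt_half]

section

variable {b t n ℓ : ℝ}

lemma mul_le_sq_of_le_of_le {x y M : ℝ} (hy : 0 ≤ y) (hxy : x ≤ y) (hyM : y ≤ M) :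
    x * y ≤ M ^ 2 :=
  (mul_le_mul (hxy.trans hyM) hyM hy (hy.trans hyM)).trans_eq (sq M).symm

lemma sq_sqrt_mul_mul_rpow_three_halves (hb : 0 ≤ b) (hn : 0 ≤ n) :
    (√b * t * n ^ ((3 : ℝ) / 2)) ^ 2 = b * t * n * (t * n ^ 2) := by
  rw [mul_pow, mul_pow, sq_sqrt hb, ← rpow_mul_natCast hn]
  norm_num
  ring

lemma mul_mul_le_sq_div_sq (ht : 0 ≤ t) (hn : 0 ≤ n) (hℓ : 0 < ℓ) (htℓ : √t * ℓ ≤ 1)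
    (hb : √t * n * ℓ ≤ b) : b * t * n ≤ b ^ 2 / ℓ ^ 2 := by
  have hb0 : 0 ≤ b := (by positivity : 0 ≤ √t * n * ℓ).trans hb
  have htnℓ : t * n * ℓ ^ 2 ≤ b :=
    calc t * n * ℓ ^ 2 = (√t * ℓ) * (√t * n * ℓ) := by
          linear_combination (-(n * ℓ ^ 2)) * sq_sqrt ht
      _ ≤ 1 * b := by gcongr
      _ = b := one_mul b
  rw [le_div_iff₀ (by positivity)]
  calc b * t * n * ℓ ^ 2 = b * (t * n * ℓ ^ 2) := by ring
    _ ≤ b * b := by gcongr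
    _ = b ^ 2 := (sq b).symm

lemma mul_mul_le_mul_div (hℓ : 0 < ℓ) (hbn : 0 ≤ b * n) (htℓ : t * ℓ ≤ 1) :
    b * t * n ≤ b * n / ℓ := by
  rw [le_div_iff₀ hℓ]
  calc b * t * n * ℓ = b * n * (t * ℓ) := by ring
    _ ≤ b * n * 1 := by gcongr
    _ = b * n := mul_one _

end

theorem stmt_17_general (n : ℕ) (t b : ℝ) (ht0 : 0 < t) (ht : t ≤ 1 / 2)
    (hb1 : 1 ≤ b) :
    ∀ ℓ : ℝ, ℓ = Real.log (1 / t) →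
    ∀ M κ : ℝ,
      M = max (max (b ^ ((1 : ℝ) / 2) * t * (n : ℝ) ^ ((3 : ℝ) / 2))
          (if b < (n : ℝ) * ℓ then b ^ 2 / ℓ ^ 2 else 0))
          (if (n : ℝ) * ℓ ≤ b then b * n / ℓ else 0) →
      κ = (if b < t ^ ((1 : ℝ) / 2) * (n : ℝ) * ℓ then t * (n : ℝ) ^ 2
           else if b < (n : ℝ) * ℓ then b ^ 2 / ℓ ^ 2 else b * n / ℓ) →
    b * t * (n : ℝ) * κ ≤ M ^ 2 := by
  rintro ℓ rfl M κ rfl rfl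
  simp only [← sqrt_eq_rpow]
  have hℓ : 0 < log (1 / t) := log_pos (by rw [lt_div_iff₀ ht0]; linarith)
  have hb : 0 ≤ b := zero_le_one.trans hb1
  by_cases h₁ : b < √t * n * log (1 / t)
  · rw [if_pos h₁, ← sq_sqrt_mul_mul_rpow_three_halves hb n.cast_nonneg]
    exact pow_le_pow_left₀ (by positivity) ((le_max_left _ _).trans (le_max_left _ _)) 2
  rw [if_neg h₁]
  push Not at h₁
  by_cases h₂ : b < n * log (1 / t)
  · simp only [if_pos h₂]
    exact mul_le_sq_of_le_of_le (by positivity)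
      (mul_mul_le_sq_div_sq ht0.le n.cast_nonneg hℓ (sqrt_mul_log_inv_le_one ht0) h₁)
      ((le_max_right _ _).trans (le_max_left _ _))
  · push Not at h₂
    simp only [if_pos h₂, if_neg (not_lt.2 h₂)]
    exact mul_le_sq_of_le_of_le (by positivity)
      (mul_mul_le_mul_div hℓ (by positivity) (mul_log_inv_le_one ht0)) (le_max_right _ _)

theorem stmt_17 (n : ℕ) (hn : 2 ≤ n) (t b : ℝ) (ht0 : 0 < t) (ht : t ≤ 1 / 2)
    (hb1 : 1 ≤ b) (hb2 : b ≤ t * (n : ℝ) ^ 2 * Real.log (1 / t)) :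
    ∀ ℓ : ℝ, ℓ = Real.log (1 / t) →
    ∀ M κ : ℝ,
      M = max (max (b ^ ((1 : ℝ) / 2) * t * (n : ℝ) ^ ((3 : ℝ) / 2))
          (if b < (n : ℝ) * ℓ then b ^ 2 / ℓ ^ 2 else 0))
          (if (n : ℝ) * ℓ ≤ b then b * n / ℓ else 0) →
      κ = (if b < t ^ ((1 : ℝ) / 2) * (n : ℝ) * ℓ then t * (n : ℝ) ^ 2
           else if b < (n : ℝ) * ℓ then b ^ 2 / ℓ ^ 2 else b * n / ℓ) →
    b * t * (n : ℝ) * κ ≤ M ^ 2 :=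
  stmt_17_general n t b ht0 ht hb1
end

section
/- Let X be a hypergeometric random variable (the number of marked items in a uniformly random m-subset of an N-set containing K marked items) with mean μ = mK/N. Then for all a > 0: P(X ≥ μ + a) ≤ exp(−a²/(2μ + 2a/3)). -/
/-! Chernoff's method. Writing `X = #(S ∩ M)` and expanding `(1 + λ) ^ X = ∑ⱼ C(X, j) λ ^ j`,
double counting gives the binomial moments
`E[C(X, j)] = C(K, j) C(m, j) / C(N, j) ≤ μ ^ j / j!`, so `E[exp (t X)] ≤ exp ((exp t - 1) μ)`,
the Poisson moment generating function. Markov's inequality at `t = a / (μ + a / 3)` together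
with `(1 - t / 3) (exp t - 1 - t) ≤ t ^ 2 / 2` then yields the exponent
`-a ^ 2 / (2 μ + 2 a / 3)`. -/

open Finset Real Nat

theorem Nat.choose_sub_mul_descFactorial {n m j : ℕ} (hjm : j ≤ m) :
    (n - j).choose (m - j) * n.descFactorial j = n.choose m * m.descFactorial j := by
  rw [descFactorial_eq_factorial_mul_choose, descFactorial_eq_factorial_mul_choose,
    mul_left_comm (n.choose m), choose_mul hjm]
  ring

theorem Nat.pow_mul_descFactorial_mul_descFactorial_le {n m : ℕ} (hm : m ≤ n) (k j : ℕ) :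
    n ^ j * (k.descFactorial j * m.descFactorial j) ≤ (m * k) ^ j * n.descFactorial j := by
  simp only [descFactorial_eq_prod_range, pow_eq_prod_const, ← prod_mul_distrib]
  refine prod_le_prod' fun i _ => ?_
  rcases le_or_gt k i with hki | hik
  · simp [Nat.sub_eq_zero_of_le hki]
  rcases le_or_gt m i with hmi | him
  · simp [Nat.sub_eq_zero_of_le hmi]
  zify [hik.le, him.le, (him.trans_le hm).le]
  have hm' : (m : ℤ) ≤ n := by exact_mod_cast hm
  have him' : (i : ℤ) ≤ m := by exact_mod_cast him.le
  nlinarith [mul_nonneg (mul_nonneg i.cast_nonneg k.cast_nonneg) (sub_nonneg.2 hm'),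
    mul_nonneg (mul_nonneg i.cast_nonneg n.cast_nonneg) (sub_nonneg.2 him')]

theorem Nat.choose_mul_choose_sub_mul_le {n m j : ℕ} (hm : m ≤ n) (hjm : j ≤ m) (k : ℕ) :
    k.choose j * (n - j).choose (m - j) * (n ^ j * j !) ≤ n.choose m * (m * k) ^ j := by
  have hpos : 0 < n.descFactorial j := descFactorial_pos.2 (hjm.trans hm)
  refine Nat.le_of_mul_le_mul_right ?_ hpos
  calc k.choose j * (n - j).choose (m - j) * (n ^ j * j !) * n.descFactorial j
      = n ^ j * (k.descFactorial j * ((n - j).choose (m - j) * n.descFactorial j)) := by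
        rw [descFactorial_eq_factorial_mul_choose k]; ring
    _ = n.choose m * (n ^ j * (k.descFactorial j * m.descFactorial j)) := by
        rw [choose_sub_mul_descFactorial hjm]; ring
    _ ≤ n.choose m * ((m * k) ^ j * n.descFactorial j) :=
        Nat.mul_le_mul_left _ (pow_mul_descFactorial_mul_descFactorial_le hm k j)
    _ = n.choose m * (m * k) ^ j * n.descFactorial j := by ring

theorem choose_mul_choose_sub_le_choose_mul_pow_div {n m j : ℕ} (hm : m ≤ n) (hjm : j ≤ m)
    (k : ℕ) :
    (k.choose j * (n - j).choose (m - j) : ℝ) ≤ n.choose m * ((m * k / n) ^ j / j !) := by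
  have hn : (0 : ℝ) < (n : ℝ) ^ j := by
    rcases Nat.eq_zero_or_pos j with rfl | hj
    · simp
    · exact pow_pos (by exact_mod_cast hj.trans_le (hjm.trans hm)) j
  rw [div_pow, div_div, mul_div_assoc', le_div_iff₀ (by positivity)]
  exact_mod_cast Nat.choose_mul_choose_sub_mul_le hm hjm k

theorem one_add_pow_eq_sum_range_choose {R : Type*} [CommSemiring R] (x : R) {k m : ℕ}
    (hkm : k ≤ m) : (1 + x) ^ k = ∑ j ∈ range (m + 1), (k.choose j : R) * x ^ j := by
  rw [add_comm, add_pow]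
  refine sum_subset (range_subset_range.2 (by omega)) (fun j _ hj => ?_) |>.trans
    (sum_congr rfl fun j _ => by ring)
  rw [mem_range, not_lt] at hj
  simp [choose_eq_zero_of_lt (show k < j by omega)]

section

variable {α : Type*} [Fintype α] [DecidableEq α]

theorem Finset.sum_powersetCard_choose_card_inter (M : Finset α) {m j : ℕ} (hjm : j ≤ m) :
    ∑ S ∈ powersetCard m univ, (#(S ∩ M)).choose j
      = (#M).choose j * (Fintype.card α - j).choose (m - j) := by
  have hchoose (S : Finset α) :
      (#(S ∩ M)).choose j = #((powersetCard j M).bipartiteAbove (fun S T => T ⊆ S) S) := by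
    rw [← card_powersetCard, bipartiteAbove]
    congr 1
    ext T
    simp only [mem_powersetCard, mem_filter, subset_inter_iff]
    tauto
  have hsupsets : ∀ T ∈ powersetCard j M,
      #((powersetCard m univ).bipartiteBelow (fun S T => T ⊆ S) T)
        = (Fintype.card α - j).choose (m - j) := by
    intro T hT
    rw [mem_powersetCard] at hT
    rw [bipartiteBelow, card_filter_powersetCard_subset T univ m (subset_univ T) (hT.2 ▸ hjm),
      card_univ, hT.2]
  simp only [hchoose]
  rw [sum_card_bipartiteAbove_eq_sum_card_bipartiteBelow, sum_congr rfl hsupsets, sum_const,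
    card_powersetCard, smul_eq_mul]

theorem sum_exp_mul_card_inter_le (M : Finset α) {m : ℕ} (hm : m ≤ Fintype.card α) {t : ℝ}
    (ht : 0 ≤ t) :
    ∑ S ∈ powersetCard m univ, exp (t * #(S ∩ M))
      ≤ (Fintype.card α).choose m * exp ((exp t - 1) * (m * #M / Fintype.card α)) := by
  set μ : ℝ := m * #M / Fintype.card α
  set x := exp t - 1
  have hx : 0 ≤ x := by linarith [one_le_exp ht]
  have hexpand : ∀ S ∈ powersetCard m univ,
      exp (t * #(S ∩ M)) = ∑ j ∈ range (m + 1), ((#(S ∩ M)).choose j : ℝ) * x ^ j := by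
    intro S hS
    have hSM : #(S ∩ M) ≤ m :=
      (card_le_card inter_subset_left).trans (mem_powersetCard.1 hS).2.le
    rw [mul_comm, exp_nat_mul, show exp t = 1 + x by ring, one_add_pow_eq_sum_range_choose x hSM]
  have hmoment : ∀ j ∈ range (m + 1),
      ∑ S ∈ powersetCard m univ, ((#(S ∩ M)).choose j : ℝ) * x ^ j
        ≤ (Fintype.card α).choose m * ((x * μ) ^ j / j !) := by
    intro j hj
    have hjm : j ≤ m := Nat.lt_succ_iff.1 (mem_range.1 hj)
    rw [← sum_mul, ← Nat.cast_sum, sum_powersetCard_choose_card_inter M hjm, Nat.cast_mul]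
    calc _ ≤ (Fintype.card α).choose m * (μ ^ j / j !) * x ^ j :=
          mul_le_mul_of_nonneg_right (choose_mul_choose_sub_le_choose_mul_pow_div hm hjm _)
            (pow_nonneg hx j)
      _ = _ := by rw [mul_pow]; ring
  calc ∑ S ∈ powersetCard m univ, exp (t * #(S ∩ M))
      = ∑ j ∈ range (m + 1), ∑ S ∈ powersetCard m univ,
          ((#(S ∩ M)).choose j : ℝ) * x ^ j := by
        rw [sum_congr rfl hexpand, sum_comm]
    _ ≤ ∑ j ∈ range (m + 1), (Fintype.card α).choose m * ((x * μ) ^ j / j !) :=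
        sum_le_sum hmoment
    _ ≤ (Fintype.card α).choose m * exp (x * μ) := by
        rw [← mul_sum]
        exact mul_le_mul_of_nonneg_left (sum_le_exp_of_nonneg (by positivity) _) (by positivity)

end

theorem Finset.card_filter_le_mul_exp_le_sum_exp {ι : Type*} (s : Finset ι) (f : ι → ℝ)
    (c : ℝ) {t : ℝ} (ht : 0 ≤ t) :
    (#{i ∈ s | c ≤ f i} : ℝ) * exp (t * c) ≤ ∑ i ∈ s, exp (t * f i) :=
  calc (#{i ∈ s | c ≤ f i} : ℝ) * exp (t * c) = ∑ i ∈ s with c ≤ f i, exp (t * c) := by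
        rw [sum_const, nsmul_eq_mul]
    _ ≤ ∑ i ∈ s with c ≤ f i, exp (t * f i) :=
        sum_le_sum fun i hi => exp_le_exp.2 (mul_le_mul_of_nonneg_left (mem_filter.1 hi).2 ht)
    _ ≤ ∑ i ∈ s, exp (t * f i) :=
        sum_le_sum_of_subset_of_nonneg (filter_subset _ _) fun _ _ _ => (exp_pos _).le

theorem nonneg_of_hasDerivAt_of_nonneg {f f' : ℝ → ℝ} (hf : ∀ x, HasDerivAt f (f' x) x)
    (hf' : ∀ x, 0 < x → 0 ≤ f' x) (h0 : f 0 = 0) {t : ℝ} (ht : 0 ≤ t) : 0 ≤ f t := by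
  have hmono : MonotoneOn f (Set.Ici 0) :=
    monotoneOn_of_hasDerivWithinAt_nonneg (convex_Ici 0)
      (fun x _ => (hf x).continuousAt.continuousWithinAt) (fun x _ => (hf x).hasDerivWithinAt)
      (fun x hx => hf' x (by simpa using hx))
  simpa [h0] using hmono Set.self_mem_Ici ht ht

theorem add_two_add_sub_two_mul_exp_nonneg {t : ℝ} (ht : 0 ≤ t) :
    0 ≤ t + 2 + (t - 2) * exp t := by
  refine nonneg_of_hasDerivAt_of_nonneg (f := fun x => x + 2 + (x - 2) * exp x)
    (f' := fun x => 1 + (x - 1) * exp x) (fun x => ?_) (fun x _ => ?_) (by norm_num) ht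
  · exact (((hasDerivAt_id' x).add_const 2).add
      (((hasDerivAt_id' x).sub_const 2).mul (hasDerivAt_exp x))).congr_deriv (by ring)
  · have h := add_one_le_exp (-x)
    have hinv : exp (-x) * exp x = 1 := by rw [← exp_add, neg_add_cancel, exp_zero]
    nlinarith [exp_pos x]

theorem one_sub_div_three_mul_exp_sub_one_sub_le {t : ℝ} (ht : 0 ≤ t) :
    (1 - t / 3) * (exp t - 1 - t) ≤ t ^ 2 / 2 := by
  suffices 0 ≤ t ^ 2 / 2 - (1 - t / 3) * (exp t - 1 - t) by linarith
  refine nonneg_of_hasDerivAt_of_nonneg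
    (f := fun x => x ^ 2 / 2 - (1 - x / 3) * (exp x - 1 - x))
    (f' := fun x => (x + 2 + (x - 2) * exp x) / 3)
    (fun x => ?_) (fun x hx => by have := add_two_add_sub_two_mul_exp_nonneg hx.le; positivity)
    (by norm_num) ht
  exact (((hasDerivAt_pow 2 x).div_const 2).sub (((hasDerivAt_id' x).div_const 3).const_sub 1
    |>.mul (((hasDerivAt_exp x).sub_const 1).sub (hasDerivAt_id' x)))).congr_deriv
    (by simp only [Pi.sub_apply]; ring)

theorem exp_sub_one_mul_sub_mul_le_neg_sq_div {μ a : ℝ} (hμ : 0 ≤ μ) (ha : 0 < a) :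
    (exp (a / (μ + a / 3)) - 1) * μ - a / (μ + a / 3) * (μ + a)
      ≤ -a ^ 2 / (2 * μ + 2 * a / 3) := by
  set t := a / (μ + a / 3)
  have hden : 0 < μ + a / 3 := by positivity
  have hta : t * (μ + a / 3) = a := div_mul_cancel₀ a hden.ne'
  have hμt : μ = (μ + a / 3) * (1 - t / 3) := by linear_combination hta / 3
  have hbound : μ * (exp t - 1 - t) ≤ t * a / 2 := by
    rw [hμt, mul_assoc, ← hta]
    nlinarith [one_sub_div_three_mul_exp_sub_one_sub_le (t := t) (by positivity)]
  have hrhs : -a ^ 2 / (2 * μ + 2 * a / 3) = -(t * a) / 2 := by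
    simp only [t]; field_simp
  rw [hrhs]
  linarith

theorem stmt_18 (N m K : ℕ) (hm : m ≤ N) (M : Finset (Fin N)) (hK : M.card = K)
    (a : ℝ) (ha : 0 < a) :
    ∀ μ : ℝ, μ = (m : ℝ) * (K : ℝ) / (N : ℝ) →
    -- Ω : all m-element subsets of an N-element set
    ∀ Ω : Finset (Finset (Fin N)),
      Ω = Finset.powersetCard m (Finset.univ : Finset (Fin N)) →
    ((Ω.filter (fun S => μ + a ≤ ((S ∩ M).card : ℝ))).card : ℝ) / (Ω.card : ℝ)
      ≤ Real.exp (-a ^ 2 / (2 * μ + 2 * a / 3)) := by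
  rintro μ rfl Ω rfl
  set μ : ℝ := m * K / N
  set t := a / (μ + a / 3)
  have ht : 0 ≤ t := by positivity
  have hmgf := sum_exp_mul_card_inter_le M (by simpa using hm) ht
  have hmarkov := card_filter_le_mul_exp_le_sum_exp (powersetCard m univ)
    (fun S => (#(S ∩ M) : ℝ)) (μ + a) ht
  simp only [Fintype.card_fin, hK] at hmgf
  have hΩ : (#(powersetCard m (univ : Finset (Fin N))) : ℝ) = N.choose m := by simp
  have hchoose : (0 : ℝ) < N.choose m := by exact_mod_cast choose_pos hm
  calc _ ≤ exp ((exp t - 1) * μ) / exp (t * (μ + a)) := by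
        rw [hΩ, div_le_div_iff₀ hchoose (exp_pos _)]
        linarith
    _ = exp ((exp t - 1) * μ - t * (μ + a)) := (exp_sub _ _).symm
    _ ≤ exp (-a ^ 2 / (2 * μ + 2 * a / 3)) :=
        exp_le_exp.2 (exp_sub_one_mul_sub_mul_le_neg_sq_div (by positivity) ha)
end

section
/- Consider the Erdős–Rényi graph process G_0,…,G_m on n vertices and let X_∧(G_i) = A_∧(G_i) − E[A_∧(G_i)|G_{i−1}], where A_∧(G_i) is the number of cherries created at step i. Then almost surely, E[X_∧(G_i)² | G_{i−1}] ≤ (32/n)·Σ_u D_u(G_{i−1})², where D_u(G) = d_u(G) − 2(i−1)/n is the degree deviation at step i−1. -/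
/-!
Conditioned on `G_{i-1}`, `A_∧` is `f(u, w) = 2 d_u + 2 d_w` for a uniform ordered non-edge
`(u, w)`. Its variance is at most its second moment about `c = 8(i-1)/n`, and
`f(u, w) - c = 2 (D_u + D_w)` with `(D_u + D_w)² ≤ 2 D_u² + 2 D_w²`. Summing over all `n(n-1)`
ordered pairs of distinct vertices instead of only the non-edges counts every `D_u²` exactly
`2(n-1)` times, and since `G_{i-1}` has fewer than `m ≤ N/2` edges there are at least
`n(n-1)/2` ordered non-edges to divide by.
-/

open Finset
open scoped Classical

theorem Finset.sum_sq_sub_mean_le {α : Type*} (s : Finset α) (f : α → ℝ) (c : ℝ) :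
    ∑ x ∈ s, (f x - (∑ y ∈ s, f y) / #s) ^ 2 ≤ ∑ x ∈ s, (f x - c) ^ 2 := by
  rcases s.eq_empty_or_nonempty with rfl | hs
  · simp
  set μ := (∑ y ∈ s, f y) / #s
  have hdev : ∑ x ∈ s, (f x - μ) = 0 := by
    rw [sum_sub_distrib, sum_const, nsmul_eq_mul, mul_div_cancel₀ _ (by simp [hs.ne_empty])]
    exact sub_self _
  have hsplit : ∑ x ∈ s, (f x - c) ^ 2
      = ∑ x ∈ s, (f x - μ) ^ 2 + 2 * (μ - c) * ∑ x ∈ s, (f x - μ) + #s * (μ - c) ^ 2 := by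
    rw [mul_sum, ← nsmul_eq_mul, ← sum_const, ← sum_add_distrib, ← sum_add_distrib]
    exact sum_congr rfl fun x _ => by ring
  rw [hsplit, hdev, mul_zero, add_zero]
  exact le_add_of_nonneg_right (by positivity)

theorem Finset.sum_offDiag_fst {α R : Type*} [DecidableEq α] [AddCommMonoid R]
    (s : Finset α) (g : α → R) :
    ∑ p ∈ s.offDiag, g p.1 = (#s - 1) • ∑ x ∈ s, g x := by
  have : s.offDiag = {p ∈ s ×ˢ s | p.1 ≠ p.2} := by ext; simp [and_assoc]
  rw [this, sum_filter, sum_product, smul_sum]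
  refine sum_congr rfl fun x hx => ?_
  rw [← sum_filter, filter_ne, sum_const (b := g x), card_erase_of_mem hx]

theorem Finset.sum_offDiag_snd {α R : Type*} [DecidableEq α] [AddCommMonoid R]
    (s : Finset α) (g : α → R) :
    ∑ p ∈ s.offDiag, g p.2 = (#s - 1) • ∑ x ∈ s, g x := by
  rw [← sum_offDiag_fst s g]
  exact sum_equiv (Equiv.prodComm α α) (by simp [and_left_comm, eq_comm]) (fun _ _ => rfl)

theorem Finset.sum_sq_add_le_of_subset_offDiag {α : Type*} [DecidableEq α] {s : Finset α}
    {t : Finset (α × α)} (ht : t ⊆ s.offDiag) (D : α → ℝ) :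
    ∑ p ∈ t, (D p.1 + D p.2) ^ 2 ≤ 4 * (#s - 1 : ℕ) * ∑ x ∈ s, D x ^ 2 :=
  calc ∑ p ∈ t, (D p.1 + D p.2) ^ 2
      ≤ ∑ p ∈ t, 2 * (D p.1 ^ 2 + D p.2 ^ 2) := sum_le_sum fun _ _ => add_sq_le
    _ ≤ ∑ p ∈ s.offDiag, 2 * (D p.1 ^ 2 + D p.2 ^ 2) :=
        sum_le_sum_of_subset_of_nonneg ht fun _ _ _ => by positivity
    _ = 4 * (#s - 1 : ℕ) * ∑ x ∈ s, D x ^ 2 := by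
        rw [← mul_sum, sum_add_distrib, sum_offDiag_fst s (D · ^ 2), sum_offDiag_snd s (D · ^ 2),
          nsmul_eq_mul]
        ring

namespace SimpleGraph

variable {V : Type*} [Fintype V] (G : SimpleGraph V)

theorem card_filter_adj : #{p : V × V | G.Adj p.1 p.2} = 2 * #G.edgeFinset := by
  rw [← dart_card_eq_twice_card_edges, ← Fintype.card_subtype]
  exact Fintype.card_congr
    { toFun := fun p => ⟨p.1, p.2⟩, invFun := fun d => ⟨d.toProd, d.adj⟩,
      left_inv := fun _ => rfl, right_inv := fun _ => rfl }

theorem card_filter_ne_and_not_adj [DecidableEq V] :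
    #{p : V × V | p.1 ≠ p.2 ∧ ¬ G.Adj p.1 p.2}
      = Fintype.card V * Fintype.card V - Fintype.card V - 2 * #G.edgeFinset := by
  have hsplit : ({p : V × V | p.1 ≠ p.2 ∧ ¬ G.Adj p.1 p.2} : Finset _)
      = univ.offDiag \ ({p : V × V | G.Adj p.1 p.2} : Finset _) := by
    ext p; simp
  rw [hsplit, card_sdiff_of_subset, offDiag_card, card_univ, card_filter_adj]
  intro p hp
  simpa using (mem_filter.1 hp).2.ne

end SimpleGraph

theorem stmt_19_general (n m i : ℕ) (him : i ≤ m)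
    (hm2 : 2 * m ≤ n * (n - 1) / 2)
    (G : SimpleGraph (Fin n)) (hkedges : G.edgeFinset.card = i - 1) :
    -- NE : the set of (ordered) non-edges of G = G_{i-1}
    ∀ NE : Finset (Fin n × Fin n),
      NE = Finset.univ.filter (fun p : Fin n × Fin n => p.1 ≠ p.2 ∧ ¬ G.Adj p.1 p.2) →
    -- condE = E[A_∧(G_i) | G_{i-1}], averaging over a uniformly random non-edge
    ∀ condE : ℝ,
      condE = (∑ p ∈ NE, (2 * (G.degree p.1 : ℝ) + 2 * (G.degree p.2 : ℝ)))
                / (NE.card : ℝ) →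
    -- E[X_∧(G_i)² | G_{i-1}] ≤ (32/n) Σ_u D_u(G_{i-1})²
    (∑ p ∈ NE, ((2 * (G.degree p.1 : ℝ) + 2 * (G.degree p.2 : ℝ)) - condE) ^ 2)
        / (NE.card : ℝ)
      ≤ (32 / (n : ℝ)) * ∑ u : Fin n, ((G.degree u : ℝ) - 2 * ((i : ℝ) - 1) / n) ^ 2 := by
  intro NE hNE condE rfl
  set D : Fin n → ℝ := fun u => (G.degree u : ℝ) - 2 * ((i : ℝ) - 1) / n
  have hcard : n * (n - 1) ≤ 2 * #NE := by
    rw [hNE, G.card_filter_ne_and_not_adj, Fintype.card_fin, hkedges]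
    rw [Nat.mul_sub_one] at hm2 ⊢
    omega
  have hsub : NE ⊆ univ.offDiag := fun p hp => by simp_all
  have hnum : ∑ p ∈ NE, (2 * (G.degree p.1 : ℝ) + 2 * (G.degree p.2 : ℝ)
        - (∑ p ∈ NE, (2 * (G.degree p.1 : ℝ) + 2 * (G.degree p.2 : ℝ))) / #NE) ^ 2
      ≤ 16 * (n - 1 : ℕ) * ∑ u, D u ^ 2 :=
    calc _ ≤ ∑ p ∈ NE, (2 * (G.degree p.1 : ℝ) + 2 * (G.degree p.2 : ℝ)
            - 8 * ((i : ℝ) - 1) / n) ^ 2 := sum_sq_sub_mean_le _ _ _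
      _ = 4 * ∑ p ∈ NE, (D p.1 + D p.2) ^ 2 := by
          rw [mul_sum]; exact sum_congr rfl fun p _ => by ring
      _ ≤ 4 * (4 * (n - 1 : ℕ) * ∑ u, D u ^ 2) := by
          gcongr; simpa using sum_sq_add_le_of_subset_offDiag hsub D
      _ = 16 * (n - 1 : ℕ) * ∑ u, D u ^ 2 := by ring
  refine div_le_of_le_mul₀ (by positivity) (by positivity) (hnum.trans ?_)
  rcases Nat.eq_zero_or_pos n with rfl | hn
  · simp
  have hcard' : (n : ℝ) * (n - 1 : ℕ) ≤ 2 * #NE := by exact_mod_cast hcard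
  have hT : 0 ≤ ∑ u, D u ^ 2 := by positivity
  rw [div_mul_eq_mul_div, div_mul_eq_mul_div, le_div_iff₀ (by positivity)]
  linarith [mul_le_mul_of_nonneg_left hcard' hT]

theorem stmt_19 (n m i : ℕ) (hn : 2 ≤ n) (hi : 1 ≤ i) (him : i ≤ m)
    (hm2 : 2 * m ≤ n * (n - 1) / 2)
    (G : SimpleGraph (Fin n)) (hkedges : G.edgeFinset.card = i - 1) :
    -- NE : the set of (ordered) non-edges of G = G_{i-1}
    ∀ NE : Finset (Fin n × Fin n),
      NE = Finset.univ.filter (fun p : Fin n × Fin n => p.1 ≠ p.2 ∧ ¬ G.Adj p.1 p.2) →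
    -- condE = E[A_∧(G_i) | G_{i-1}], averaging over a uniformly random non-edge
    ∀ condE : ℝ,
      condE = (∑ p ∈ NE, (2 * (G.degree p.1 : ℝ) + 2 * (G.degree p.2 : ℝ)))
                / (NE.card : ℝ) →
    -- E[X_∧(G_i)² | G_{i-1}] ≤ (32/n) Σ_u D_u(G_{i-1})²
    (∑ p ∈ NE, ((2 * (G.degree p.1 : ℝ) + 2 * (G.degree p.2 : ℝ)) - condE) ^ 2)
        / (NE.card : ℝ)
      ≤ (32 / (n : ℝ)) * ∑ u : Fin n, ((G.degree u : ℝ) - 2 * ((i : ℝ) - 1) / n) ^ 2 :=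
  stmt_19_general n m i him hm2 G hkedges
end
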